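/- arXiv:0803.2450 — 5 statements merged into one kernel-verified Lean document; each statement's English description precedes it below -/
import Mathlib

section
/- Let 0<α≤1 and set s_α = -3/4 if 0<α≤1/2 and s_α = -3/(5-2α) if 1/2<α≤1. Let s ≤ s_α. Then there exists δ₀>0 such that for every δ ∈ (0, δ₀) the bilinear estimate fails: for every constant C>0 there exist nonnegative functions F, G ∈ L²(ℝ²) such that ‖ |ξ| ⟨ξ⟩^s w(ξ,τ)^{-1/2+δ} ∬_{ℝ²} [F(ξ₁,τ₁) ⟨ξ₁⟩^{-s} w(ξ₁,τ₁)^{-1/2}] · [G(ξ-ξ₁, τ-τ₁) ⟨ξ-ξ₁⟩^{-s} w(ξ-ξ₁, τ-τ₁)^{-1/2}] dξ₁ dτ₁ ‖_{L²_{ξ,τ}(ℝ²)} > C ‖F‖_{L²(ℝ²)} ‖G‖_{L²(ℝ²)}. -/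
open MeasureTheory

/-- The Japanese bracket `⟨ξ⟩ = (1+ξ²)^{1/2}`. -/
noncomputable def jap (x : ℝ) : ℝ := Real.sqrt (1 + x ^ 2)

/-- The KdV–Burgers weight `w(ξ,τ) = (1 + (τ-ξ³)² + |ξ|^{4α})^{1/2}`. -/
noncomputable def kdvbWeight (α ξ τ : ℝ) : ℝ :=
  Real.sqrt (1 + (τ - ξ ^ 3) ^ 2 + |ξ| ^ (4 * α))

/-!
Take `N` large, `γ = N^(α-1/2)` and `L = 100 N^(2α)`, and let `F`, `G` be the indicators of the
boxes of width `γ` and height `L` around the cubic `τ = ξ³` over `ξ ∈ [N, N+γ]` and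
`ξ ∈ [-N-γ, -N]`; on them `w ≲ L`, the modulation being of the size of the dissipation
`|ξ|^(2α)`. For an output frequency `ξ ∈ [γ/4, γ/2]` the resonance function varies by only
`≲ γ² N = L / 100` over these boxes, so for `p` within `L/8` of the curve `τ = (N+ξ)³ - N³` a
whole `γ/2 × L` box of points `q` has `q ∈ supp F` and `p - q ∈ supp G`, and the convolution
integral at `p` is `≳ N^(-2s) L⁻¹ · γ L`. There `w(p) ≲ N² γ` and `⟨ξ⟩ ≲ N^max(α-1/2, 0)`, and
these `p` fill a set of measure `∼ γ L ∼ ‖F‖ ‖G‖`, so the left-hand side is `≳ N^E ‖F‖ ‖G‖`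
with `E = -3/2 - 2s + max(α-1/2, 0) s + (α+3/2) δ`, which is positive for `s ≤ s_α`, `δ > 0`.
-/

open Set

theorem one_le_jap (x : ℝ) : 1 ≤ jap x :=
  Real.one_le_sqrt.mpr (by nlinarith)

theorem jap_pos (x : ℝ) : 0 < jap x := one_pos.trans_le (one_le_jap x)

theorem abs_le_jap (x : ℝ) : |x| ≤ jap x := by
  rw [← Real.sqrt_sq_eq_abs]
  exact Real.sqrt_le_sqrt (by linarith)

theorem jap_le_one_add_abs (x : ℝ) : jap x ≤ 1 + |x| :=
  Real.sqrt_le_iff.mpr ⟨by positivity, by nlinarith [sq_abs x, abs_nonneg x]⟩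

theorem measurable_jap : Measurable jap := by
  unfold jap; fun_prop

theorem one_le_kdvbWeight (α ξ τ : ℝ) : 1 ≤ kdvbWeight α ξ τ :=
  Real.one_le_sqrt.mpr <| by
    linarith [sq_nonneg (τ - ξ ^ 3), Real.rpow_nonneg (abs_nonneg ξ) (4 * α)]

theorem kdvbWeight_pos (α ξ τ : ℝ) : 0 < kdvbWeight α ξ τ :=
  one_pos.trans_le (one_le_kdvbWeight α ξ τ)

theorem measurable_kdvbWeight (α : ℝ) :
    Measurable fun p : ℝ × ℝ => kdvbWeight α p.1 p.2 := by
  unfold kdvbWeight; fun_prop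

theorem kdvbWeight_le {α ξ τ W : ℝ} (hW : 1 ≤ W) (hmod : |τ - ξ ^ 3| ≤ W)
    (hdiss : |ξ| ^ (4 * α) ≤ W ^ 2) : kdvbWeight α ξ τ ≤ 2 * W :=
  Real.sqrt_le_iff.mpr
    ⟨by positivity, by nlinarith [sq_abs (τ - ξ ^ 3), abs_nonneg (τ - ξ ^ 3)]⟩

theorem rpow_le_one_add_pow_four {x a : ℝ} (hx : 0 ≤ x) (ha₀ : 0 ≤ a) (ha₁ : a ≤ 4) :
    x ^ a ≤ 1 + x ^ 4 := by
  rcases le_total x 1 with h | h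
  · linarith [Real.rpow_le_one hx h ha₀, pow_nonneg hx 4]
  · have := Real.rpow_le_rpow_of_exponent_le h ha₁
    norm_cast at this
    linarith

theorem ofReal_mul_measure_rpow_le_eLpNorm {X E : Type*} [MeasurableSpace X] {μ : Measure X}
    [NormedAddCommGroup E] {f : X → E} {s : Set X} {p : ENNReal} {m : ℝ}
    (hs : MeasurableSet s) (hp : p ≠ 0) (hp_top : p ≠ ⊤) (hm : ∀ x ∈ s, m ≤ ‖f x‖) :
    ENNReal.ofReal m * μ s ^ (1 / p.toReal) ≤ eLpNorm f p μ := by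
  rcases le_or_gt m 0 with hm₀ | hm₀
  · simp [ENNReal.ofReal_of_nonpos hm₀]
  rw [← Real.enorm_of_nonneg hm₀.le, ← eLpNorm_indicator_const hs hp hp_top]
  refine eLpNorm_mono fun x => ?_
  by_cases hx : x ∈ s
  · simpa [indicator_of_mem hx, abs_of_pos hm₀] using hm x hx
  · simp [indicator_of_notMem hx]

theorem mul_measureReal_le_integral {X : Type*} [MeasurableSpace X] {μ : Measure X}
    {f : X → ℝ} {s : Set X} {c : ℝ} (hf : Integrable f μ) (hf₀ : 0 ≤ f)
    (hs : MeasurableSet s) (hμs : μ s ≠ ⊤) (hc : ∀ x ∈ s, c ≤ f x) :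
    c * μ.real s ≤ ∫ x, f x ∂μ := by
  rw [mul_comm, ← smul_eq_mul]
  exact (setIntegral_ge_of_const_le hs hμs hc hf.integrableOn).trans
    (setIntegral_le_integral hf (Filter.Eventually.of_forall hf₀))

def curvedStrip (f : ℝ → ℝ) (a b r : ℝ) : Set (ℝ × ℝ) :=
  regionBetween (fun x => f x - r) (fun x => f x + r) (Icc a b)

section CurvedStrip

variable {f : ℝ → ℝ} {a b r : ℝ}

theorem mem_curvedStrip {p : ℝ × ℝ} :
    p ∈ curvedStrip f a b r ↔ p.1 ∈ Icc a b ∧ |p.2 - f p.1| < r := by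
  simp only [curvedStrip, regionBetween, mem_ofPred_eq, mem_Ioo, abs_sub_lt_iff]
  constructor <;> rintro ⟨h, h₁, h₂⟩ <;> exact ⟨h, by linarith, by linarith⟩

theorem measurableSet_curvedStrip (hf : Measurable f) :
    MeasurableSet (curvedStrip f a b r) :=
  measurableSet_regionBetween (hf.sub measurable_const) (hf.add measurable_const)
    measurableSet_Icc

theorem volume_curvedStrip (hf : Measurable f) (hr : 0 ≤ r) :
    volume (curvedStrip f a b r) = ENNReal.ofReal (2 * r * (b - a)) := by
  rw [curvedStrip, Measure.volume_eq_prod, volume_regionBetween_eq_lintegral'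
    (f := fun x => f x - r) (g := fun x => f x + r) (hf.sub measurable_const)
    (hf.add measurable_const) measurableSet_Icc]
  simp only [Pi.sub_apply, add_sub_sub_cancel, ← two_mul]
  rw [setLIntegral_const, Real.volume_Icc, ← ENNReal.ofReal_mul (by positivity)]

end CurvedStrip

noncomputable def weightedInput (α s : ℝ) (F : ℝ × ℝ → ℝ) (q : ℝ × ℝ) : ℝ :=
  F q * jap q.1 ^ (-s) * kdvbWeight α q.1 q.2 ^ (-(1 / 2 : ℝ))

noncomputable def bilinearOutput (α s δ : ℝ) (F G : ℝ × ℝ → ℝ) (p : ℝ × ℝ) : ℝ :=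
  |p.1| * jap p.1 ^ s * kdvbWeight α p.1 p.2 ^ (-(1 / 2 : ℝ) + δ) *
    ∫ q, weightedInput α s F q * weightedInput α s G (p - q)

section WeightedInput

variable {α s : ℝ} {F : ℝ × ℝ → ℝ}

theorem weightedInput_nonneg {q : ℝ × ℝ} (hF : 0 ≤ F q) : 0 ≤ weightedInput α s F q := by
  unfold weightedInput
  have := jap_pos q.1
  have := kdvbWeight_pos α q.1 q.2
  positivity

theorem measurable_weightedInput (hF : Measurable F) : Measurable (weightedInput α s F) :=
  (hF.mul ((measurable_jap.comp measurable_fst).pow_const _)).mul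
    ((measurable_kdvbWeight α).pow_const _)

theorem weightedInput_indicator_le (hs : s ≤ 0) {S : Set (ℝ × ℝ)} {R : ℝ}
    (hS : ∀ q ∈ S, |q.1| ≤ R) (q : ℝ × ℝ) :
    weightedInput α s (S.indicator fun _ => 1) q ≤ S.indicator (fun _ => (1 + R) ^ (-s)) q := by
  by_cases hq : q ∈ S
  · rw [weightedInput, indicator_of_mem hq, indicator_of_mem hq, one_mul]
    refine (mul_le_of_le_one_right (Real.rpow_nonneg (jap_pos _).le _) ?_).trans ?_
    · exact Real.rpow_le_one_of_one_le_of_nonpos (one_le_kdvbWeight _ _ _) (by norm_num)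
    · exact Real.rpow_le_rpow (jap_pos _).le
        ((jap_le_one_add_abs _).trans (by linarith [hS q hq])) (by linarith)
  · simp [weightedInput, indicator_of_notMem hq]

theorem weightedInput_indicator_le_const (hs : s ≤ 0) {S : Set (ℝ × ℝ)} {R : ℝ}
    (hR : 0 ≤ R) (hS : ∀ q ∈ S, |q.1| ≤ R) (q : ℝ × ℝ) :
    weightedInput α s (S.indicator fun _ => 1) q ≤ (1 + R) ^ (-s) := by
  refine (weightedInput_indicator_le hs hS q).trans ?_
  by_cases hq : q ∈ S
  · rw [indicator_of_mem hq]
  · rw [indicator_of_notMem hq]; positivity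

theorem integrable_weightedInput_indicator (hs : s ≤ 0) {S : Set (ℝ × ℝ)} {R : ℝ}
    (hSm : MeasurableSet S) (hSv : volume S ≠ ⊤) (hS : ∀ q ∈ S, |q.1| ≤ R) :
    Integrable (weightedInput α s (S.indicator fun _ => 1)) := by
  refine Integrable.mono'
    ((integrable_indicator_iff hSm).mpr (integrableOn_const (C := (1 + R) ^ (-s)) hSv))
    (measurable_weightedInput (measurable_const.indicator hSm)).aestronglyMeasurable
    (ae_of_all _ fun q => ?_)
  rw [Real.norm_of_nonneg (weightedInput_nonneg (indicator_nonneg (fun _ _ => zero_le_one) q))]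
  exact weightedInput_indicator_le hs hS q

end WeightedInput

namespace KdVB

variable (α N : ℝ)

noncomputable def freqWidth : ℝ := N ^ (α - 1 / 2)

noncomputable def modWidth : ℝ := 100 * N ^ (2 * α)

def posBox : Set (ℝ × ℝ) := curvedStrip (· ^ 3) N (N + freqWidth α N) (modWidth α N)

def negBox : Set (ℝ × ℝ) := curvedStrip (· ^ 3) (-(N + freqWidth α N)) (-N) (modWidth α N)

def outBox : Set (ℝ × ℝ) :=
  curvedStrip (fun ξ => (N + ξ) ^ 3 - N ^ 3) (freqWidth α N / 4) (freqWidth α N / 2)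
    (modWidth α N / 8)

def fiber (p : ℝ × ℝ) : Set (ℝ × ℝ) :=
  curvedStrip (· ^ 3) (p.1 + N) (p.1 + N + freqWidth α N / 2) (modWidth α N / 2)

variable {α N} {s δ : ℝ}

theorem freqWidth_pos (hN : 0 < N) : 0 < freqWidth α N := Real.rpow_pos_of_pos hN _

theorem modWidth_pos (hN : 0 < N) : 0 < modWidth α N :=
  mul_pos (by norm_num) (Real.rpow_pos_of_pos hN _)

theorem one_le_modWidth (hα : 0 ≤ α) (hN : 1 ≤ N) : 1 ≤ modWidth α N := by
  have := Real.one_le_rpow hN (by linarith : 0 ≤ 2 * α)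
  rw [modWidth]; linarith

theorem freqWidth_le (hα : α ≤ 1) (hN : 1 ≤ N) : freqWidth α N ≤ N :=
  (Real.rpow_le_rpow_of_exponent_le hN (by linarith : α - 1 / 2 ≤ 1)).trans_eq (Real.rpow_one N)

theorem modWidth_eq (hN : 0 < N) : modWidth α N = 100 * freqWidth α N ^ 2 * N := by
  rw [modWidth, freqWidth, ← Real.rpow_natCast, ← Real.rpow_mul hN.le, mul_assoc,
    ← Real.rpow_add_one hN.ne']
  ring_nf

theorem sq_mul_freqWidth (hN : 0 < N) : N ^ 2 * freqWidth α N = N ^ (α + 3 / 2) := by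
  rw [freqWidth, ← Real.rpow_natCast, ← Real.rpow_add hN]
  ring_nf

theorem two_mul_modWidth_mul_freqWidth (hN : 0 < N) :
    2 * modWidth α N * freqWidth α N = 200 * N ^ (3 * α - 1 / 2) := by
  rw [modWidth, freqWidth, mul_assoc, mul_assoc, ← Real.rpow_add hN]
  ring_nf

theorem measurableSet_posBox : MeasurableSet (posBox α N) :=
  measurableSet_curvedStrip (by fun_prop)

theorem measurableSet_negBox : MeasurableSet (negBox α N) :=
  measurableSet_curvedStrip (by fun_prop)

theorem measurableSet_outBox : MeasurableSet (outBox α N) :=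
  measurableSet_curvedStrip (by fun_prop)

theorem volume_posBox (hN : 0 < N) :
    volume (posBox α N) = ENNReal.ofReal (2 * modWidth α N * freqWidth α N) := by
  rw [posBox, volume_curvedStrip (by fun_prop) (modWidth_pos hN).le, add_sub_cancel_left]

theorem volume_negBox (hN : 0 < N) :
    volume (negBox α N) = ENNReal.ofReal (2 * modWidth α N * freqWidth α N) := by
  rw [negBox, volume_curvedStrip (by fun_prop) (modWidth_pos hN).le, neg_sub_neg,
    add_sub_cancel_left]

theorem volume_outBox (hN : 0 < N) :
    volume (outBox α N) = ENNReal.ofReal (2 * modWidth α N * freqWidth α N / 32) := by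
  rw [outBox, volume_curvedStrip (by fun_prop) (by linarith [modWidth_pos (α := α) hN])]
  ring_nf

theorem abs_fst_mem_of_mem_posBox (hα : α ≤ 1) (hN : 1 ≤ N) {q : ℝ × ℝ}
    (hq : q ∈ posBox α N) : N ≤ |q.1| ∧ |q.1| ≤ 2 * N := by
  obtain ⟨⟨h₁, h₂⟩, -⟩ := mem_curvedStrip.mp hq
  have := freqWidth_le hα hN
  rw [abs_of_nonneg (by linarith)]
  exact ⟨h₁, by linarith⟩

theorem abs_fst_mem_of_mem_negBox (hα : α ≤ 1) (hN : 1 ≤ N) {q : ℝ × ℝ}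
    (hq : q ∈ negBox α N) : N ≤ |q.1| ∧ |q.1| ≤ 2 * N := by
  obtain ⟨⟨h₁, h₂⟩, -⟩ := mem_curvedStrip.mp hq
  have := freqWidth_le hα hN
  rw [abs_of_nonpos (by linarith)]
  exact ⟨by linarith, by linarith⟩

theorem fiber_subset_posBox (hN : 0 < N) {p : ℝ × ℝ} (hp : p ∈ outBox α N) :
    fiber α N p ⊆ posBox α N := by
  intro q hq
  obtain ⟨⟨hp₁, hp₂⟩, -⟩ := mem_curvedStrip.mp hp
  obtain ⟨⟨hq₁, hq₂⟩, hq⟩ := mem_curvedStrip.mp hq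
  have := modWidth_pos (α := α) hN
  exact mem_curvedStrip.mpr ⟨⟨by linarith, by linarith⟩, by linarith⟩

theorem sub_mem_negBox (hα : α ≤ 1) (hN : 1 ≤ N) {p q : ℝ × ℝ} (hp : p ∈ outBox α N)
    (hq : q ∈ fiber α N p) : p - q ∈ negBox α N := by
  obtain ⟨⟨hp₁, hp₂⟩, hp⟩ := mem_curvedStrip.mp hp
  obtain ⟨⟨hq₁, hq₂⟩, hq⟩ := mem_curvedStrip.mp hq
  rw [modWidth_eq (by linarith)] at hp hq
  rw [negBox, mem_curvedStrip, Prod.fst_sub, Prod.snd_sub, modWidth_eq (by linarith)]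
  set ξ := p.1
  set η := q.1
  set γ := freqWidth α N
  have hγ : 0 < γ := freqWidth_pos (by linarith)
  have hγN : γ ≤ N := freqWidth_le hα hN
  have hres : |(N + ξ) ^ 3 - N ^ 3 - η ^ 3 - (ξ - η) ^ 3| ≤ 9 / 4 * γ ^ 2 * N := by
    have h₁ : 0 ≤ (η - ξ - N) * ξ := mul_nonneg (by linarith) (by linarith)
    have h₂ : (η - ξ - N) * ξ ≤ γ / 2 * (γ / 2) :=
      mul_le_mul (by linarith) hp₂ (by linarith) (by linarith)
    rw [show (N + ξ) ^ 3 - N ^ 3 - η ^ 3 - (ξ - η) ^ 3 = -(3 * ((η - ξ - N) * ξ) * (N + η)) by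
        ring, abs_neg, abs_of_nonneg (mul_nonneg (by positivity) (by linarith))]
    nlinarith
  obtain ⟨hp₃, hp₄⟩ := abs_lt.mp hp
  obtain ⟨hq₃, hq₄⟩ := abs_lt.mp hq
  obtain ⟨hr₁, hr₂⟩ := abs_le.mp hres
  exact ⟨⟨by linarith, by linarith⟩, abs_lt.mpr ⟨by linarith, by linarith⟩⟩

theorem kdvbWeight_le_two_mul_modWidth (hα₀ : 0 ≤ α) (hα₁ : α ≤ 1) (hN : 1 ≤ N) {ξ τ : ℝ}
    (hξ : |ξ| ≤ 2 * N) (hτ : |τ - ξ ^ 3| < modWidth α N) :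
    kdvbWeight α ξ τ ≤ 2 * modWidth α N := by
  refine kdvbWeight_le (one_le_modWidth hα₀ hN) hτ.le ?_
  have h₁ : (2 : ℝ) ^ (4 * α) ≤ 16 :=
    (Real.rpow_le_rpow_of_exponent_le one_le_two (by linarith : 4 * α ≤ 4)).trans_eq
      (by norm_num)
  have h₂ : N ^ (4 * α) = (N ^ (2 * α)) ^ 2 := by
    rw [← Real.rpow_natCast, ← Real.rpow_mul (by linarith)]; ring_nf
  calc |ξ| ^ (4 * α) ≤ (2 * N) ^ (4 * α) := Real.rpow_le_rpow (abs_nonneg ξ) hξ (by linarith)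
    _ = 2 ^ (4 * α) * (N ^ (2 * α)) ^ 2 := by rw [Real.mul_rpow zero_le_two (by linarith), h₂]
    _ ≤ modWidth α N ^ 2 := by rw [modWidth]; nlinarith [sq_nonneg (N ^ (2 * α))]

theorem inputFactor_ge (hα₀ : 0 ≤ α) (hα₁ : α ≤ 1) (hs : s ≤ 0) (hN : 1 ≤ N) {ξ τ : ℝ}
    (hξ₁ : N ≤ |ξ|) (hξ₂ : |ξ| ≤ 2 * N) (hτ : |τ - ξ ^ 3| < modWidth α N) :
    N ^ (-s) * (2 * modWidth α N) ^ (-(1 / 2 : ℝ)) ≤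
      jap ξ ^ (-s) * kdvbWeight α ξ τ ^ (-(1 / 2 : ℝ)) :=
  mul_le_mul (Real.rpow_le_rpow (by linarith) (hξ₁.trans (abs_le_jap ξ)) (by linarith))
    (Real.rpow_le_rpow_of_nonpos (kdvbWeight_pos α ξ τ)
      (kdvbWeight_le_two_mul_modWidth hα₀ hα₁ hN hξ₂ hτ) (by norm_num))
    (Real.rpow_nonneg (by linarith [one_le_modWidth hα₀ hN]) _)
    (Real.rpow_nonneg (jap_pos ξ).le _)

theorem integrand_ge_of_mem_fiber (hα₀ : 0 ≤ α) (hα₁ : α ≤ 1) (hs : s ≤ 0) (hN : 1 ≤ N)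
    {p q : ℝ × ℝ} (hp : p ∈ outBox α N) (hq : q ∈ fiber α N p) :
    (N ^ (-s) * (2 * modWidth α N) ^ (-(1 / 2 : ℝ))) ^ 2 ≤
      weightedInput α s ((posBox α N).indicator fun _ => 1) q *
        weightedInput α s ((negBox α N).indicator fun _ => 1) (p - q) := by
  have hqF := fiber_subset_posBox (by linarith) hp hq
  have hqG := sub_mem_negBox hα₁ hN hp hq
  obtain ⟨hqF₁, hqF₂⟩ := abs_fst_mem_of_mem_posBox hα₁ hN hqF
  obtain ⟨hqG₁, hqG₂⟩ := abs_fst_mem_of_mem_negBox hα₁ hN hqG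
  have hF := inputFactor_ge hα₀ hα₁ hs hN hqF₁ hqF₂ (mem_curvedStrip.mp hqF).2
  have hG := inputFactor_ge hα₀ hα₁ hs hN hqG₁ hqG₂ (mem_curvedStrip.mp hqG).2
  have hc : 0 ≤ N ^ (-s) * (2 * modWidth α N) ^ (-(1 / 2 : ℝ)) := by
    have := modWidth_pos (α := α) (by linarith : (0 : ℝ) < N)
    positivity
  rw [weightedInput, weightedInput, indicator_of_mem hqF, indicator_of_mem hqG, one_mul, one_mul,
    sq]
  exact mul_le_mul hF hG hc (hc.trans hF)

theorem integrable_integrand (hα : α ≤ 1) (hs : s ≤ 0) (hN : 1 ≤ N) (p : ℝ × ℝ) :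
    Integrable fun q => weightedInput α s ((posBox α N).indicator fun _ => 1) q *
      weightedInput α s ((negBox α N).indicator fun _ => 1) (p - q) := by
  refine (integrable_weightedInput_indicator hs measurableSet_posBox
    (by simp [volume_posBox (by linarith : (0 : ℝ) < N)])
    fun q hq => (abs_fst_mem_of_mem_posBox hα hN hq).2).mul_bdd (c := (1 + 2 * N) ^ (-s))
    ((measurable_weightedInput (measurable_const.indicator measurableSet_negBox)).comp
      (measurable_const.sub measurable_id)).aestronglyMeasurable
    (ae_of_all _ fun q => ?_)
  rw [Real.norm_of_nonneg
    (weightedInput_nonneg (indicator_nonneg (fun _ _ => zero_le_one) _))]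
  exact weightedInput_indicator_le_const hs (by linarith)
    (fun q hq => (abs_fst_mem_of_mem_negBox hα hN hq).2) _

theorem integral_ge (hα₀ : 0 ≤ α) (hα₁ : α ≤ 1) (hs : s ≤ 0) (hN : 1 ≤ N) {p : ℝ × ℝ}
    (hp : p ∈ outBox α N) :
    N ^ (-2 * s) * freqWidth α N / 4 ≤
      ∫ q, weightedInput α s ((posBox α N).indicator fun _ => 1) q *
        weightedInput α s ((negBox α N).indicator fun _ => 1) (p - q) := by
  have hN₀ : (0 : ℝ) < N := by linarith
  have hγ := freqWidth_pos (α := α) hN₀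
  have hL := modWidth_pos (α := α) hN₀
  have hvol : volume (fiber α N p) =
      ENNReal.ofReal (2 * (modWidth α N / 2) * (freqWidth α N / 2)) := by
    rw [fiber, volume_curvedStrip (by fun_prop) (by linarith), add_sub_cancel_left]
  have hc : (N ^ (-s) * (2 * modWidth α N) ^ (-(1 / 2 : ℝ))) ^ 2 =
      N ^ (-2 * s) * (2 * modWidth α N)⁻¹ := by
    rw [mul_pow, ← Real.rpow_natCast, ← Real.rpow_natCast, ← Real.rpow_mul hN₀.le,
      ← Real.rpow_mul (by linarith), ← Real.rpow_neg_one]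
    norm_num [mul_comm]
  calc N ^ (-2 * s) * freqWidth α N / 4 =
        (N ^ (-s) * (2 * modWidth α N) ^ (-(1 / 2 : ℝ))) ^ 2 * volume.real (fiber α N p) := by
        rw [measureReal_def, hvol, ENNReal.toReal_ofReal (by positivity), hc]
        field_simp
        ring
    _ ≤ _ := mul_measureReal_le_integral (integrable_integrand hα₁ hs hN p)
        (fun q => mul_nonneg (weightedInput_nonneg (indicator_nonneg (fun _ _ => zero_le_one) _))
          (weightedInput_nonneg (indicator_nonneg (fun _ _ => zero_le_one) _)))
        (measurableSet_curvedStrip (by fun_prop)) (by simp [hvol])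
        fun q hq => integrand_ge_of_mem_fiber hα₀ hα₁ hs hN hp hq

theorem jap_le_of_mem_outBox (hN : 1 ≤ N) {p : ℝ × ℝ} (hp : p ∈ outBox α N) :
    jap p.1 ≤ 2 * N ^ max (α - 1 / 2) 0 := by
  obtain ⟨⟨hp₁, hp₂⟩, -⟩ := mem_curvedStrip.mp hp
  have hγ : freqWidth α N ≤ N ^ max (α - 1 / 2) 0 :=
    Real.rpow_le_rpow_of_exponent_le hN (le_max_left _ _)
  have h₁ : 1 ≤ N ^ max (α - 1 / 2) 0 := Real.one_le_rpow hN (le_max_right _ _)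
  have := freqWidth_pos (α := α) (by linarith : (0 : ℝ) < N)
  refine (jap_le_one_add_abs _).trans ?_
  rw [abs_of_pos (by linarith)]
  linarith

theorem kdvbWeight_le_of_mem_outBox (hα₀ : 0 ≤ α) (hα₁ : α ≤ 1) (hN : 1 ≤ N) {p : ℝ × ℝ}
    (hp : p ∈ outBox α N) : kdvbWeight α p.1 p.2 ≤ 30 * N ^ (α + 3 / 2) := by
  obtain ⟨⟨hp₁, hp₂⟩, hp₃⟩ := mem_curvedStrip.mp hp
  have hN₀ : (0 : ℝ) < N := by linarith
  have hγ := freqWidth_pos (α := α) hN₀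
  have hγN := freqWidth_le hα₁ hN
  have hW : 1 ≤ N ^ 2 * freqWidth α N := by
    rw [sq_mul_freqWidth hN₀]; exact Real.one_le_rpow hN (by linarith)
  rw [← sq_mul_freqWidth hN₀, show (30 : ℝ) * _ = 2 * (15 * (N ^ 2 * freqWidth α N)) by ring]
  rw [modWidth_eq hN₀] at hp₃
  set γ := freqWidth α N
  obtain ⟨hp₄, hp₅⟩ := abs_lt.mp hp₃
  have hξ : 0 ≤ p.1 := by linarith
  have h₁ : N ^ 2 * p.1 ≤ N ^ 2 * γ / 2 := by nlinarith
  have h₂ : γ ^ 2 * N ≤ N ^ 2 * γ := by nlinarith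
  have h₃ : N * p.1 ^ 2 ≤ γ ^ 2 * N / 4 := by nlinarith
  refine kdvbWeight_le (by linarith) (abs_le.mpr ⟨by nlinarith, by nlinarith⟩) ?_
  have h₄ : (γ ^ 2) ^ 2 ≤ (N ^ 2 * γ) ^ 2 := pow_le_pow_left₀ (by positivity) (by nlinarith) 2
  calc |p.1| ^ (4 * α) ≤ 1 + |p.1| ^ 4 :=
        rpow_le_one_add_pow_four (abs_nonneg _) (by linarith) (by linarith)
    _ ≤ 1 + γ ^ 4 := by rw [abs_of_nonneg hξ]; gcongr; linarith
    _ ≤ (15 * (N ^ 2 * γ)) ^ 2 := by nlinarith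

theorem outputFactor_ge (hα₀ : 0 ≤ α) (hα₁ : α ≤ 1) (hs : s ≤ 0) (hδ : δ ≤ 1 / 2)
    (hN : 1 ≤ N) {p : ℝ × ℝ} (hp : p ∈ outBox α N) :
    N ^ (α - 1 / 2) / 4 * (2 ^ s * N ^ (max (α - 1 / 2) 0 * s)) *
        (30 ^ (-(1 / 2 : ℝ) + δ) * N ^ ((α + 3 / 2) * (-(1 / 2 : ℝ) + δ))) ≤
      |p.1| * jap p.1 ^ s * kdvbWeight α p.1 p.2 ^ (-(1 / 2 : ℝ) + δ) := by
  have hN₀ : (0 : ℝ) < N := by linarith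
  obtain ⟨⟨hp₁, -⟩, -⟩ := mem_curvedStrip.mp hp
  have hγ := freqWidth_pos (α := α) hN₀
  rw [Real.rpow_mul hN₀.le, Real.rpow_mul hN₀.le, ← Real.mul_rpow zero_le_two (by positivity),
    ← Real.mul_rpow (by norm_num) (by positivity)]
  have hξ : N ^ (α - 1 / 2) / 4 ≤ |p.1| := (le_abs_self _).trans' hp₁
  have hjap := Real.rpow_le_rpow_of_nonpos (jap_pos _) (jap_le_of_mem_outBox hN hp) hs
  have hw := Real.rpow_le_rpow_of_nonpos (kdvbWeight_pos _ _ _)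
    (kdvbWeight_le_of_mem_outBox hα₀ hα₁ hN hp) (by linarith : -(1 / 2 : ℝ) + δ ≤ 0)
  exact mul_le_mul (mul_le_mul hξ hjap (by positivity) (abs_nonneg _)) hw (by positivity)
    (mul_nonneg (abs_nonneg _) (Real.rpow_nonneg (jap_pos _).le _))

noncomputable def outputLowerBound (α s δ N : ℝ) : ℝ :=
  N ^ (α - 1 / 2) / 4 * (2 ^ s * N ^ (max (α - 1 / 2) 0 * s)) *
    (30 ^ (-(1 / 2 : ℝ) + δ) * N ^ ((α + 3 / 2) * (-(1 / 2 : ℝ) + δ))) *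
    (N ^ (-2 * s) * N ^ (α - 1 / 2) / 4)

theorem bilinearOutput_ge (hα₀ : 0 ≤ α) (hα₁ : α ≤ 1) (hs : s ≤ 0) (hδ : δ ≤ 1 / 2)
    (hN : 1 ≤ N) {p : ℝ × ℝ} (hp : p ∈ outBox α N) :
    outputLowerBound α s δ N ≤
      bilinearOutput α s δ ((posBox α N).indicator fun _ => 1)
        ((negBox α N).indicator fun _ => 1) p := by
  have hN₀ : (0 : ℝ) < N := by linarith
  have hout := outputFactor_ge hα₀ hα₁ hs hδ hN hp
  rw [outputLowerBound]
  exact mul_le_mul hout (integral_ge hα₀ hα₁ hs hN hp) (by positivity)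
    (hout.trans' (by positivity))

noncomputable def criticalIndex (α : ℝ) : ℝ :=
  if α ≤ 1 / 2 then -(3 : ℝ) / 4 else -3 / (5 - 2 * α)

noncomputable def gainExponent (α s δ : ℝ) : ℝ :=
  -3 / 2 + max (α - 1 / 2) 0 * s - 2 * s + (α + 3 / 2) * δ

theorem criticalIndex_neg (hα : α ≤ 1) : criticalIndex α < 0 := by
  unfold criticalIndex
  split_ifs
  · norm_num
  · exact div_neg_of_neg_of_pos (by norm_num) (by linarith)

theorem gainExponent_pos (hα₀ : 0 ≤ α) (hα₁ : α ≤ 1) (hs : s ≤ criticalIndex α)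
    (hδ : 0 < δ) : 0 < gainExponent α s δ := by
  have hδ' : 0 < (α + 3 / 2) * δ := by positivity
  unfold gainExponent
  unfold criticalIndex at hs
  split_ifs at hs with h
  · rw [max_eq_right (by linarith)]
    linarith
  · rw [max_eq_left (by linarith)]
    have := (le_div_iff₀ (by linarith : (0 : ℝ) < 5 - 2 * α)).mp hs
    nlinarith

theorem outputLowerBound_mul_sqrt_eq (hN : 0 < N) :
    outputLowerBound α s δ N * Real.sqrt (2 * modWidth α N * freqWidth α N / 32) =
      2 ^ s * 30 ^ (-(1 / 2 : ℝ) + δ) / 1280 * N ^ gainExponent α s δ *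
        (2 * modWidth α N * freqWidth α N) := by
  have hsqrt : Real.sqrt (200 * N ^ (3 * α - 1 / 2) / 32) =
      5 / 2 * N ^ ((3 * α - 1 / 2) / 2) := by
    rw [show 200 * N ^ (3 * α - 1 / 2) / 32 = (5 / 2) ^ 2 * N ^ (3 * α - 1 / 2) by ring,
      Real.sqrt_mul (by norm_num), Real.sqrt_sq (by norm_num), Real.sqrt_eq_rpow,
      ← Real.rpow_mul hN.le]
    ring_nf
  have hcollect : N ^ (α - 1 / 2) * N ^ (max (α - 1 / 2) 0 * s) *
      N ^ ((α + 3 / 2) * (-(1 / 2 : ℝ) + δ)) * N ^ (-2 * s) * N ^ (α - 1 / 2) *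
      N ^ ((3 * α - 1 / 2) / 2) = N ^ gainExponent α s δ * N ^ (3 * α - 1 / 2) := by
    simp only [← Real.rpow_add hN, gainExponent]
    ring_nf
  rw [outputLowerBound, two_mul_modWidth_mul_freqWidth hN, hsqrt]
  calc _ = 2 ^ s * 30 ^ (-(1 / 2 : ℝ) + δ) * (5 / 32) *
        (N ^ (α - 1 / 2) * N ^ (max (α - 1 / 2) 0 * s) *
          N ^ ((α + 3 / 2) * (-(1 / 2 : ℝ) + δ)) * N ^ (-2 * s) * N ^ (α - 1 / 2) *
          N ^ ((3 * α - 1 / 2) / 2)) := by ring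
    _ = _ := by rw [hcollect]; ring

theorem ofReal_le_eLpNorm_bilinearOutput (hα₀ : 0 ≤ α) (hα₁ : α ≤ 1) (hs : s ≤ 0)
    (hδ : δ ≤ 1 / 2) (hN : 1 ≤ N) :
    ENNReal.ofReal (2 ^ s * 30 ^ (-(1 / 2 : ℝ) + δ) / 1280 * N ^ gainExponent α s δ *
        (2 * modWidth α N * freqWidth α N)) ≤
      eLpNorm (bilinearOutput α s δ ((posBox α N).indicator fun _ => 1)
        ((negBox α N).indicator fun _ => 1)) 2 volume := by
  have hN₀ : (0 : ℝ) < N := by linarith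
  have hγ := freqWidth_pos (α := α) hN₀
  have hL := modWidth_pos (α := α) hN₀
  rw [← outputLowerBound_mul_sqrt_eq hN₀, ENNReal.ofReal_mul' (Real.sqrt_nonneg _),
    Real.sqrt_eq_rpow, ← ENNReal.ofReal_rpow_of_nonneg (by positivity) (by norm_num),
    ← volume_outBox hN₀]
  convert ofReal_mul_measure_rpow_le_eLpNorm measurableSet_outBox two_ne_zero
    ENNReal.ofNat_ne_top fun p hp => (bilinearOutput_ge hα₀ hα₁ hs hδ hN hp).trans
      (Real.le_norm_self _) using 3
  norm_num

theorem eLpNorm_posBox_mul_eLpNorm_negBox (hN : 0 < N) :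
    eLpNorm ((posBox α N).indicator fun _ => (1 : ℝ)) 2 volume *
        eLpNorm ((negBox α N).indicator fun _ => (1 : ℝ)) 2 volume =
      ENNReal.ofReal (2 * modWidth α N * freqWidth α N) := by
  have hγ := freqWidth_pos (α := α) hN
  have hL := modWidth_pos (α := α) hN
  rw [eLpNorm_indicator_const measurableSet_posBox two_ne_zero ENNReal.ofNat_ne_top,
    eLpNorm_indicator_const measurableSet_negBox two_ne_zero ENNReal.ofNat_ne_top,
    volume_posBox hN, volume_negBox hN, enorm_one, one_mul,
    ← ENNReal.rpow_add _ _ (by simp; positivity) ENNReal.ofReal_ne_top]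
  norm_num

end KdVB

open Filter KdVB

/-- Sharpness of the bilinear estimate for the KdV–Burgers equation below the critical index:
for `0 < α ≤ 1` and `s ≤ s_α`, there is `δ₀ > 0` such that for every `δ ∈ (0, δ₀)` and every
constant `C > 0` the bilinear `L²` estimate fails for some nonnegative `F, G ∈ L²(ℝ²)`. -/
theorem kdvb_bilinear_estimate_fails (α : ℝ) (hα₁ : 0 < α) (hα₂ : α ≤ 1) (s : ℝ)
    (hs : s ≤ (if α ≤ 1 / 2 then -(3 : ℝ) / 4 else -3 / (5 - 2 * α))) :
    ∃ δ₀ > (0 : ℝ), ∀ δ ∈ Set.Ioo (0 : ℝ) δ₀, ∀ C > (0 : ℝ),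
      ∃ F G : ℝ × ℝ → ℝ, Measurable F ∧ Measurable G ∧
        MemLp F 2 volume ∧ MemLp G 2 volume ∧
        (∀ p, 0 ≤ F p) ∧ (∀ p, 0 ≤ G p) ∧
        ENNReal.ofReal C * eLpNorm F 2 volume * eLpNorm G 2 volume <
          eLpNorm (fun p : ℝ × ℝ =>
            |p.1| * jap p.1 ^ s * kdvbWeight α p.1 p.2 ^ (-(1 / 2 : ℝ) + δ) *
              ∫ q : ℝ × ℝ,
                (F q * jap q.1 ^ (-s) * kdvbWeight α q.1 q.2 ^ (-(1 / 2 : ℝ))) *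
                (G (p - q) * jap (p.1 - q.1) ^ (-s) *
                  kdvbWeight α (p.1 - q.1) (p.2 - q.2) ^ (-(1 / 2 : ℝ)))) 2 volume := by
  have hs₀ : s ≤ 0 := hs.trans (criticalIndex_neg hα₂).le
  refine ⟨1 / 2, one_half_pos, fun δ hδ C hC => ?_⟩
  have hK : (0 : ℝ) < 2 ^ s * 30 ^ (-(1 / 2 : ℝ) + δ) / 1280 := by positivity
  obtain ⟨N, hCN, hN⟩ :
      ∃ N, C < 2 ^ s * 30 ^ (-(1 / 2 : ℝ) + δ) / 1280 * N ^ gainExponent α s δ ∧ 1 ≤ N :=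
    ((((tendsto_rpow_atTop (gainExponent_pos hα₁.le hα₂ hs hδ.1)).const_mul_atTop hK)
      |>.eventually_gt_atTop C).and (eventually_ge_atTop 1)).exists
  have hN₀ : (0 : ℝ) < N := by linarith
  have hA : 0 < 2 * modWidth α N * freqWidth α N := by
    have := freqWidth_pos (α := α) hN₀
    have := modWidth_pos (α := α) hN₀
    positivity
  refine ⟨(posBox α N).indicator fun _ => 1, (negBox α N).indicator fun _ => 1,
    measurable_const.indicator measurableSet_posBox,
    measurable_const.indicator measurableSet_negBox,
    memLp_indicator_const 2 measurableSet_posBox 1 (Or.inr (by simp [volume_posBox hN₀])),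
    memLp_indicator_const 2 measurableSet_negBox 1 (Or.inr (by simp [volume_negBox hN₀])),
    indicator_nonneg fun _ _ => zero_le_one, indicator_nonneg fun _ _ => zero_le_one, ?_⟩
  rw [mul_assoc, eLpNorm_posBox_mul_eLpNorm_negBox hN₀, ← ENNReal.ofReal_mul hC.le]
  calc ENNReal.ofReal (C * (2 * modWidth α N * freqWidth α N))
      < ENNReal.ofReal (2 ^ s * 30 ^ (-(1 / 2 : ℝ) + δ) / 1280 * N ^ gainExponent α s δ *
          (2 * modWidth α N * freqWidth α N)) :=
        (ENNReal.ofReal_lt_ofReal_iff (by positivity)).mpr (mul_lt_mul_of_pos_right hCN hA)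
    _ ≤ _ := ofReal_le_eLpNorm_bilinearOutput hα₁.le hα₂ hs₀ hδ.2.le hN
end

section
/- Let k ∈ ℕ and let a₁,…,a_k and b₁,…,b_k be nonnegative real numbers. Let A₁ ≤ A₂ ≤ … ≤ A_k be a nondecreasing rearrangement of (a₁,…,a_k) (i.e. A_i = a_{σ(i)} for some permutation σ of {1,…,k}) and let B₁ ≤ B₂ ≤ … ≤ B_k be a nondecreasing rearrangement of (b₁,…,b_k). Then ∏_{i=1}^k (a_i + b_i) ≥ ∏_{i=1}^k (A_i + B_i). -/
/-!
Bubble sort: if the pairing `i ↦ π i` is not the identity, take the largest index `i` it moves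
and re-pair so that `i` is matched with itself. This fixes one more point and, by the two-term
inequality `(x + y) (x' + y') ≤ (x + y') (x' + y)` for `x ≤ x'`, `y ≤ y'`, does not increase
the product.
-/

open Finset Equiv Equiv.Perm

section

variable {R : Type*} [CommSemiring R] [PartialOrder R] [IsOrderedRing R]

theorem add_mul_add_le_add_mul_add [ExistsAddOfLE R] [AddLeftReflectLE R] {x x' y y' : R}
    (hx : x ≤ x') (hy : y ≤ y') : (x + y) * (x' + y') ≤ (x + y') * (x' + y) :=
  calc (x + y) * (x' + y') = x * x' + y * y' + (x * y' + x' * y) := by ring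
    _ ≤ x * x' + y * y' + (x * y + x' * y') :=
      add_le_add_right (mul_add_mul_le_mul_add_mul hx hy) _
    _ = (x + y') * (x' + y) := by ring

theorem prod_le_prod_of_eq_off_pair {ι : Type*} [Fintype ι] [DecidableEq ι] {f g : ι → R}
    {i j : ι} (hij : i ≠ j) (hg : ∀ k, 0 ≤ g k) (hfg : ∀ k, k ≠ i → k ≠ j → f k = g k)
    (hpair : f i * f j ≤ g i * g j) : ∏ k, f k ≤ ∏ k, g k := by
  rw [← prod_mul_prod_compl {i, j} f, ← prod_mul_prod_compl {i, j} g, prod_pair hij,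
    prod_pair hij, prod_congr rfl fun k hk => hfg k (by aesop) (by aesop)]
  exact mul_le_mul_of_nonneg_right hpair (prod_nonneg fun k _ => hg k)

theorem prod_diag_le_prod_perm {ι : Type*} [Fintype ι] [LinearOrder ι] {φ : ι → ι → R}
    (h0 : ∀ i j, 0 ≤ φ i j)
    (hφ : ∀ ⦃i i' j j'⦄, i ≤ i' → j ≤ j' → φ i j * φ i' j' ≤ φ i j' * φ i' j)
    (π : Perm ι) : ∏ i, φ i i ≤ ∏ i, φ i (π i) := by
  rcases π.support.eq_empty_or_nonempty with hπ | hπ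
  · simp [support_eq_empty_iff.1 hπ]
  set i := π.support.max' hπ
  have hi_mem : i ∈ π.support := max'_mem _ _
  have hi : π i ≠ i := mem_support.1 hi_mem
  set j := π.symm i
  have hji : j ≠ i := fun h => hi (by rw [← h, apply_symm_apply, h])
  have hj_le : j ≤ i := le_max' _ _ (mem_support.2 (by simpa [j] using hji.symm))
  have hπi_le : π i ≤ i := le_max' _ _ (apply_mem_support.2 hi_mem)
  calc ∏ k, φ k k ≤ ∏ k, φ k ((swap i (π i) * π) k) := prod_diag_le_prod_perm h0 hφ _
    _ ≤ ∏ k, φ k (π k) := by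
      refine prod_le_prod_of_eq_off_pair hji (fun k => h0 _ _) (fun k hkj hki => ?_) ?_
      · rw [mul_apply, swap_apply_of_ne_of_ne (fun h => hkj (by simp [j, ← h]))
          (π.injective.ne hki)]
      · simpa [j] using hφ hj_le hπi_le
termination_by #π.support
decreasing_by exact card_support_swap_mul hi

end

/-- Rearrangement inequality for products of sums: if `A_i = a (σ i)` (resp. `B_i = b (τ i)`)
is a nondecreasing rearrangement of the nonnegative family `a` (resp. `b`), then
`∏ (aᵢ + bᵢ) ≥ ∏ (Aᵢ + Bᵢ)`. -/
theorem prod_add_ge_prod_monotone_rearrangement (k : ℕ)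
    (a b : Fin k → ℝ) (ha : ∀ i, 0 ≤ a i) (hb : ∀ i, 0 ≤ b i)
    (σ τ : Equiv.Perm (Fin k))
    (hA : Monotone fun i => a (σ i)) (hB : Monotone fun i => b (τ i)) :
    ∏ i, (a (σ i) + b (τ i)) ≤ ∏ i, (a i + b i) :=
  calc ∏ i, (a (σ i) + b (τ i))
      ≤ ∏ i, (a (σ i) + b (τ ((τ⁻¹ * σ) i))) :=
        prod_diag_le_prod_perm (φ := fun i j => a (σ i) + b (τ j))
          (fun i j => add_nonneg (ha _) (hb _))
          (fun _ _ _ _ hi hj => add_mul_add_le_add_mul_add (hA hi) (hB hj)) _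
    _ = ∏ i, (a (σ i) + b (σ i)) := by simp
    _ = ∏ i, (a i + b i) := Equiv.prod_comp σ fun i => a i + b i
end

section
/- There is an absolute constant C > 0 such that for every integer k ≥ 10 and all functions u, v ∈ L²(ℝ), g ∈ L²(ℝ²), where u is supported in {ξ : |ξ| ≤ 2} and v is supported in {ξ : 2^{k-1} ≤ |ξ| ≤ 2^{k+1}}, one has | ∬_{ℝ²} u(ξ₁) v(ξ₂) g( ξ₁+ξ₂, -3 ξ₁ ξ₂ (ξ₁+ξ₂) ) dξ₁ dξ₂ | ≤ C 2^{-k} ‖u‖_{L²(ℝ)} ‖v‖_{L²(ℝ)} ‖g‖_{L²(ℝ²)}. -/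
open MeasureTheory Set ENNReal

/-!
The map `Φ (ξ₁, ξ₂) = (ξ₁ + ξ₂, -3 ξ₁ ξ₂ (ξ₁ + ξ₂))` has Jacobian `3 (ξ₂² - ξ₁²)`, which on the
low×high region `|ξ₁| ≤ 2 < 2^(k-1) ≤ |ξ₂|` is at least `4^(k-1)`; there `Φ` is also injective,
since it determines `ξ₁ + ξ₂ ≠ 0` and hence `ξ₁ ξ₂`, and `|ξ₁| < |ξ₂|` tells the two roots apart.
By the change of variables formula, `g ∘ Φ` restricted to the region has `L²` norm at most
`2^(1-k) ‖g‖₂`, and Cauchy–Schwarz on `ℝ²` against `u ⊗ v`, of `L²` norm `‖u‖₂ ‖v‖₂`, gives the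
estimate with `C = 2`.
-/

section Lp

variable {α β : Type*} [MeasurableSpace α] [MeasurableSpace β] {μ : Measure α} {ν : Measure β}

theorem eLpNorm_prod_mul {𝕜 : Type*} [NormedDivisionRing 𝕜] [SFinite ν] {f : α → 𝕜} {g : β → 𝕜}
    {p : ℝ≥0∞} (hp0 : p ≠ 0) (hp : p ≠ ∞) (hf : AEStronglyMeasurable f μ)
    (hg : AEStronglyMeasurable g ν) :
    eLpNorm (fun z : α × β => f z.1 * g z.2) p (μ.prod ν) = eLpNorm f p μ * eLpNorm g p ν := by
  simp only [eLpNorm_eq_lintegral_rpow_enorm_toReal hp0 hp, enorm_mul]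
  simp_rw [mul_rpow_of_nonneg _ _ toReal_nonneg]
  rw [lintegral_prod_mul (hf.enorm.pow_const _) (hg.enorm.pow_const _),
    mul_rpow_of_nonneg _ _ (by positivity)]

theorem ofReal_norm_integral_integral_mul_le {𝕜 : Type*} [RCLike 𝕜] [SFinite μ] [SFinite ν]
    {u : α → 𝕜} {v : β → 𝕜} {G : α × β → 𝕜} (hu : MemLp u 2 μ) (hv : MemLp v 2 ν)
    (hG : MemLp G 2 (μ.prod ν)) :
    ENNReal.ofReal ‖∫ x, ∫ y, u x * v y * G (x, y) ∂ν ∂μ‖ ≤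
      eLpNorm u 2 μ * eLpNorm v 2 ν * eLpNorm G 2 (μ.prod ν) := by
  set F : α × β → 𝕜 := fun z => u z.1 * v z.2
  have hF : MemLp F 2 (μ.prod ν) := by
    refine ⟨hu.1.comp_fst.mul hv.1.comp_snd, ?_⟩
    rw [eLpNorm_prod_mul two_ne_zero ofNat_ne_top hu.1 hv.1]
    exact mul_lt_top hu.eLpNorm_lt_top hv.eLpNorm_lt_top
  have hFG : Integrable (Function.uncurry fun x y => u x * v y * G (x, y)) (μ.prod ν) :=
    hF.integrable_mul hG
  rw [integral_integral hFG, ofReal_norm]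
  calc ‖∫ z, F z * G z ∂μ.prod ν‖ₑ ≤ eLpNorm (F * G) 1 (μ.prod ν) := by
        rw [eLpNorm_one_eq_lintegral_enorm]; exact enorm_integral_le_lintegral_enorm _
    _ ≤ eLpNorm F 2 (μ.prod ν) * eLpNorm G 2 (μ.prod ν) :=
        eLpNorm_smul_le_mul_eLpNorm (𝕜 := 𝕜) (E := 𝕜) (p := 2) (q := 2) hG.1 hF.1
    _ = _ := by rw [eLpNorm_prod_mul two_ne_zero ofNat_ne_top hu.1 hv.1]

variable {E : Type*} [NormedAddCommGroup E] {s : Set α} {f : α → β} {c : ℝ≥0∞}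

theorem eLpNorm_indicator_comp_le_of_map_le {g : β → E} {p : ℝ≥0∞} (hp : p ≠ ∞)
    (hs : MeasurableSet s) (hf : AEMeasurable f (μ.restrict s)) (hfc : (μ.restrict s).map f ≤ c • ν)
    (hg : AEStronglyMeasurable g ν) :
    eLpNorm (s.indicator (g ∘ f)) p μ ≤ c ^ (1 / p).toReal * eLpNorm g p ν := by
  rw [eLpNorm_indicator_eq_eLpNorm_restrict hs,
    ← eLpNorm_map_measure (hg.mono_ac (Measure.absolutelyContinuous_of_le_smul hfc)) hf]
  exact (eLpNorm_mono_measure g hfc).trans_eq (eLpNorm_smul_measure_of_ne_top hp g c)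

theorem memLp_indicator_comp_of_map_le {g : β → E} {p : ℝ≥0∞} (hc : c ≠ ∞)
    (hs : MeasurableSet s) (hf : AEMeasurable f (μ.restrict s)) (hfc : (μ.restrict s).map f ≤ c • ν)
    (hg : MemLp g p ν) : MemLp (s.indicator (g ∘ f)) p μ := by
  rw [memLp_indicator_iff_restrict hs,
    ← memLp_map_measure_iff (hg.1.mono_ac (Measure.absolutelyContinuous_of_le_smul hfc)) hf]
  exact hg.of_measure_le_smul hc hfc

end Lp

theorem mul_mul_indicator_prod_of_support_subset {α β 𝕜 : Type*} [MulZeroClass 𝕜] {u : α → 𝕜}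
    {v : β → 𝕜} {s : Set α} {t : Set β} (hu : u.support ⊆ s) (hv : v.support ⊆ t)
    (G : α × β → 𝕜) (x : α) (y : β) :
    u x * v y * (s ×ˢ t).indicator G (x, y) = u x * v y * G (x, y) := by
  by_cases hx : u x = 0
  · simp only [hx, zero_mul]
  by_cases hy : v y = 0
  · simp only [hy, mul_zero, zero_mul]
  rw [indicator_of_mem (mk_mem_prod (hu hx) (hv hy))]

section ChangeOfVariables

variable {E : Type*} [NormedAddCommGroup E] [NormedSpace ℝ E] [FiniteDimensional ℝ E]
  [MeasurableSpace E] [BorelSpace E] (μ : Measure E) [μ.IsAddHaarMeasure]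
  {s : Set E} {f : E → E} {f' : E → E →L[ℝ] E} {c : ℝ}

theorem ofReal_mul_setLIntegral_comp_le_lintegral (hs : MeasurableSet s)
    (hf' : ∀ x ∈ s, HasFDerivWithinAt f (f' x) s x) (hf : InjOn f s)
    (hdet : ∀ x ∈ s, c ≤ |(f' x).det|) (g : E → ℝ≥0∞) :
    ENNReal.ofReal c * ∫⁻ x in s, g (f x) ∂μ ≤ ∫⁻ y, g y ∂μ :=
  calc ENNReal.ofReal c * ∫⁻ x in s, g (f x) ∂μ
      = ∫⁻ x in s, ENNReal.ofReal c * g (f x) ∂μ := (lintegral_const_mul' _ _ ofReal_ne_top).symm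
    _ ≤ ∫⁻ x in s, ENNReal.ofReal |(f' x).det| * g (f x) ∂μ :=
        setLIntegral_mono' hs fun x hx => by gcongr; exact hdet x hx
    _ = ∫⁻ y in f '' s, g y ∂μ :=
        (lintegral_image_eq_lintegral_abs_det_fderiv_mul μ hs hf' hf g).symm
    _ ≤ ∫⁻ y, g y ∂μ := setLIntegral_le_lintegral _ _

theorem map_restrict_le_of_le_abs_det (hs : MeasurableSet s)
    (hf' : ∀ x ∈ s, HasFDerivWithinAt f (f' x) s x) (hf : InjOn f s) (hc : 0 < c)
    (hdet : ∀ x ∈ s, c ≤ |(f' x).det|) :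
    (μ.restrict s).map f ≤ (ENNReal.ofReal c)⁻¹ • μ := by
  have hfm : AEMeasurable f (μ.restrict s) := aemeasurable_restrict_of_measurable_subtype hs
    (measurableEmbedding_of_fderivWithin hs hf' hf).measurable
  refine Measure.le_intro fun t ht _ => ?_
  rw [Measure.smul_apply, smul_eq_mul, ← mul_le_iff_le_inv (by simpa using hc) ofReal_ne_top,
    ← lintegral_indicator_one ht, ← lintegral_indicator_one ht,
    lintegral_map' (measurable_one.indicator ht).aemeasurable hfm]
  exact ofReal_mul_setLIntegral_comp_le_lintegral μ hs hf' hf hdet _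

end ChangeOfVariables

def resonanceMap (p : ℝ × ℝ) : ℝ × ℝ := (p.1 + p.2, -3 * p.1 * p.2 * (p.1 + p.2))

def resonanceMapFDeriv (p : ℝ × ℝ) : ℝ × ℝ →L[ℝ] ℝ × ℝ :=
  (ContinuousLinearMap.fst ℝ ℝ ℝ + ContinuousLinearMap.snd ℝ ℝ ℝ).prod
    ((-3 * p.2 * (2 * p.1 + p.2)) • ContinuousLinearMap.fst ℝ ℝ ℝ +
      (-3 * p.1 * (p.1 + 2 * p.2)) • ContinuousLinearMap.snd ℝ ℝ ℝ)

def lowHighRegion (b a : ℝ) : Set (ℝ × ℝ) := {x | |x| ≤ b} ×ˢ {y | a ≤ |y|}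

theorem continuous_resonanceMap : Continuous resonanceMap := by
  unfold resonanceMap; fun_prop

theorem hasFDerivAt_resonanceMap (p : ℝ × ℝ) :
    HasFDerivAt resonanceMap (resonanceMapFDeriv p) p := by
  have hx : HasFDerivAt (fun q : ℝ × ℝ => q.1) (ContinuousLinearMap.fst ℝ ℝ ℝ) p := hasFDerivAt_fst
  have hy : HasFDerivAt (fun q : ℝ × ℝ => q.2) (ContinuousLinearMap.snd ℝ ℝ ℝ) p := hasFDerivAt_snd
  refine ((hx.add hy).prodMk (((hx.const_mul (-3 : ℝ)).mul hy).mul (hx.add hy)))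
    |>.congr_fderiv (ContinuousLinearMap.ext fun q => ?_)
  ext
  · simp [resonanceMapFDeriv]
  · simp only [resonanceMapFDeriv, ContinuousLinearMap.prod_apply, Pi.mul_apply, Pi.add_apply,
      add_apply, smul_apply, ContinuousLinearMap.coe_fst', ContinuousLinearMap.coe_snd',
      smul_eq_mul]
    ring

theorem det_resonanceMapFDeriv (p : ℝ × ℝ) :
    (resonanceMapFDeriv p).det = 3 * (p.2 ^ 2 - p.1 ^ 2) := by
  rw [ContinuousLinearMap.det, ← LinearMap.det_toMatrix (Module.Basis.finTwoProd ℝ),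
    Matrix.det_fin_two]
  simp only [resonanceMapFDeriv, LinearMap.toMatrix_apply, ContinuousLinearMap.coe_prod,
    ContinuousLinearMap.toLinearMap_add, ContinuousLinearMap.toLinearMap_smul,
    ContinuousLinearMap.coe_fst, ContinuousLinearMap.coe_snd, LinearMap.prod_apply,
    Function.prod_apply, LinearMap.add_apply, LinearMap.smul_apply, LinearMap.fst_apply,
    LinearMap.snd_apply, Module.Basis.finTwoProd_zero, Module.Basis.finTwoProd_one,
    Module.Basis.coe_finTwoProd_repr, smul_eq_mul, Matrix.cons_val_zero, Matrix.cons_val_one,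
    Matrix.cons_val_fin_one]
  ring

variable {a b : ℝ}

theorem measurableSet_lowHighRegion : MeasurableSet (lowHighRegion b a) :=
  (measurableSet_le continuous_abs.measurable measurable_const).prod
    (measurableSet_le measurable_const continuous_abs.measurable)

theorem injOn_resonanceMap (hba : b < a) : InjOn resonanceMap (lowHighRegion b a) := by
  rintro ⟨x, y⟩ ⟨hx, hy⟩ ⟨x', y'⟩ ⟨hx', hy'⟩ h
  simp only [mem_ofPred_eq] at hx hy hx' hy'
  simp only [resonanceMap, Prod.mk.injEq] at h
  obtain ⟨hsum, hcub⟩ := h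
  have hs : x + y ≠ 0 := fun h0 => by
    have : |y| = |x| := by rw [abs_eq_abs]; right; linarith
    linarith
  have hprod : x * y = x' * y' := by
    rw [← hsum] at hcub
    have := mul_right_cancel₀ hs hcub
    linarith
  have hroots : (x - x') * (x - y') = 0 := by linear_combination x * hsum - hprod
  rcases mul_eq_zero.1 hroots with hxx' | hxy'
  · simp only [Prod.mk.injEq]; constructor <;> linarith
  · have : |y'| = |x| := by rw [show x = y' by linarith]
    linarith

theorem le_abs_det_resonanceMapFDeriv (ha : 0 ≤ a) {p : ℝ × ℝ} (hp : p ∈ lowHighRegion b a) :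
    3 * (a ^ 2 - b ^ 2) ≤ |(resonanceMapFDeriv p).det| := by
  obtain ⟨hx, hy⟩ := hp
  have hx2 : p.1 ^ 2 ≤ b ^ 2 := sq_le_sq' (abs_le.1 hx).1 (abs_le.1 hx).2
  have hy2 : a ^ 2 ≤ p.2 ^ 2 := by simpa only [sq_abs] using pow_le_pow_left₀ ha hy 2
  rw [det_resonanceMapFDeriv]
  exact le_abs.2 (Or.inl (by linarith))

theorem map_restrict_resonanceMap_le {k : ℕ} (hk : 3 ≤ k) :
    (volume.restrict (lowHighRegion 2 (2 ^ (k - 1)))).map resonanceMap ≤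
      ENNReal.ofReal (2 * 2 ^ (-(k : ℝ))) ^ 2 • volume := by
  set a : ℝ := 2 ^ (k - 1)
  have ha : 4 ≤ a := by
    calc (4 : ℝ) = 2 ^ 2 := by norm_num
      _ ≤ a := pow_le_pow_right₀ one_le_two (by omega)
  have h2k : (2 : ℝ) * 2 ^ (-(k : ℝ)) = a⁻¹ := by
    have : (2 : ℝ) ^ k = 2 * a := by rw [← pow_succ', Nat.sub_add_cancel (by omega)]
    rw [Real.rpow_neg zero_le_two, Real.rpow_natCast, this, mul_inv, ← mul_assoc,
      mul_inv_cancel₀ two_ne_zero, one_mul]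
  rw [h2k, ofReal_inv_of_pos (by positivity), ← ENNReal.inv_pow, ← ofReal_pow (by positivity)]
  exact map_restrict_le_of_le_abs_det volume measurableSet_lowHighRegion
    (fun p _ => (hasFDerivAt_resonanceMap p).hasFDerivWithinAt) (injOn_resonanceMap (by linarith))
    (by positivity) fun p hp => (by nlinarith : a ^ 2 ≤ 3 * (a ^ 2 - 2 ^ 2)).trans
      (le_abs_det_resonanceMapFDeriv (by positivity) hp)

/-- Bilinear estimate on the resonance surface of the Airy symbol (low×high → high
interaction): pairing `g ∈ L²(ℝ²)` along the surface `(ξ₁+ξ₂, -3ξ₁ξ₂(ξ₁+ξ₂))` against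
`u` supported at frequencies `|ξ| ≤ 2` and `v` supported at `|ξ| ∼ 2^k` gains `2^{-k}`. -/
theorem airy_resonance_surface_bilinear :
    ∃ C > (0 : ℝ), ∀ k : ℕ, 10 ≤ k →
      ∀ (u v : ℝ → ℂ) (g : ℝ × ℝ → ℂ),
        MemLp u 2 volume → MemLp v 2 volume → MemLp g 2 volume →
        (∀ ξ : ℝ, u ξ ≠ 0 → |ξ| ≤ 2) →
        (∀ ξ : ℝ, v ξ ≠ 0 → (2 : ℝ) ^ (k - 1) ≤ |ξ| ∧ |ξ| ≤ (2 : ℝ) ^ (k + 1)) →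
        ENNReal.ofReal
            ‖∫ ξ₁ : ℝ, ∫ ξ₂ : ℝ, u ξ₁ * v ξ₂ * g (ξ₁ + ξ₂, -3 * ξ₁ * ξ₂ * (ξ₁ + ξ₂))‖ ≤
          ENNReal.ofReal (C * (2 : ℝ) ^ (-(k : ℝ))) *
            eLpNorm u 2 volume * eLpNorm v 2 volume * eLpNorm g 2 volume := by
  refine ⟨2, two_pos, fun k hk u v g hu hv hg hsu hsv => ?_⟩
  set S := lowHighRegion 2 (2 ^ (k - 1))
  set δ : ℝ := 2 * 2 ^ (-(k : ℝ))
  have hmap := map_restrict_resonanceMap_le (by omega : 3 ≤ k)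
  have hfm : AEMeasurable resonanceMap (volume.restrict S) :=
    continuous_resonanceMap.measurable.aemeasurable
  have hG : MemLp (S.indicator (g ∘ resonanceMap)) 2 volume :=
    memLp_indicator_comp_of_map_le (pow_ne_top ofReal_ne_top) measurableSet_lowHighRegion hfm hmap
      hg
  have hGnorm : eLpNorm (S.indicator (g ∘ resonanceMap)) 2 volume ≤
      ENNReal.ofReal δ * eLpNorm g 2 volume := by
    refine (eLpNorm_indicator_comp_le_of_map_le ofNat_ne_top measurableSet_lowHighRegion hfm hmap
      hg.1).trans_eq ?_
    rw [← rpow_natCast, ← rpow_mul, show ((2 : ℕ) : ℝ) * (1 / (2 : ℝ≥0∞)).toReal = 1 by norm_num,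
      rpow_one]
  have hsupp : ∀ x y, u x * v y * g (x + y, -3 * x * y * (x + y)) =
      u x * v y * S.indicator (g ∘ resonanceMap) (x, y) := fun x y =>
    (mul_mul_indicator_prod_of_support_subset (fun x hx => hsu x hx) (fun y hy => (hsv y hy).1)
      (g ∘ resonanceMap) x y).symm
  simp_rw [hsupp]
  calc _ ≤ eLpNorm u 2 volume * eLpNorm v 2 volume *
        eLpNorm (S.indicator (g ∘ resonanceMap)) 2 volume :=
        ofReal_norm_integral_integral_mul_le hu hv hG
    _ ≤ eLpNorm u 2 volume * eLpNorm v 2 volume * (ENNReal.ofReal δ * eLpNorm g 2 volume) := by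
        gcongr
    _ = _ := by ring
end

section
/- Let N ≥ 1, C₀ > 0, and let m : ℝ → (0,1] be a continuously differentiable even function with m(ξ) = 1 for |ξ| ≤ N, m nonincreasing on [0,∞), and |(m²)'(ξ)| ≤ C₀ m²(ξ)/|ξ| for |ξ| ≥ N. Then there is a constant C depending only on C₀ such that for all real ξ₁, ξ₂, ξ₃ with ξ₁+ξ₂+ξ₃ = 0 and |ξ₁| ≤ |ξ₂| ≤ |ξ₃|: (i) |m²(ξ₁)ξ₁ + m²(ξ₂)ξ₂ + m²(ξ₃)ξ₃| ≤ C m²(ξ₁) |ξ₁|; and (ii) if moreover ξ₁ ≠ 0 and ε > 0, 0 < α ≤ 1, then the multiplier σ₃(ξ₁,ξ₂,ξ₃) = -i(m²(ξ₁)ξ₁ + m²(ξ₂)ξ₂ + m²(ξ₃)ξ₃) / ( 3iξ₁ξ₂ξ₃ - ε(|ξ₁|^{2α}+|ξ₂|^{2α}+|ξ₃|^{2α}) ) satisfies |σ₃(ξ₁,ξ₂,ξ₃)| ≤ C m²(ξ₁) / ξ₃². -/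
/-!
Put `g ξ = m ξ ^ 2 * ξ`. As `m` is even, `g` is odd, so the cubic sum equals
`g ξ₁ + (g ξ₂ - g (-ξ₃))` with `ξ₂ - (-ξ₃) = -ξ₁`. The ordering `|ξ₁| ≤ |ξ₂| ≤ |ξ₃|` forces `ξ₂`
and `-ξ₃` to have the same sign, so every point `x` between them has `|ξ₁| ≤ |x|`. There
`g' = (m²)' x + m²` is at most `(C₀ + 1) m x ^ 2 ≤ (C₀ + 1) m ξ₁ ^ 2` in modulus (`m ≡ 1` near
`|x| < N`, the derivative hypothesis for `|x| ≥ N`, and monotonicity of `m`), and the mean value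
theorem gives (i) with `C = C₀ + 2`. For (ii), the damping term is real, so the denominator has
modulus at least `3 |ξ₁ ξ₂ ξ₃| ≥ (3/2) |ξ₁| ξ₃²`, because `|ξ₃| ≤ |ξ₁| + |ξ₂| ≤ 2 |ξ₂|`.
-/

open Set Complex Filter Topology

lemma min_abs_le_abs_of_mem_uIcc {a b x : ℝ} (hab : 0 ≤ a * b) (hx : x ∈ uIcc a b) :
    min |a| |b| ≤ |x| := by
  rcases mul_nonneg_iff.1 hab with ⟨ha, hb⟩ | ⟨ha, hb⟩
  · rw [abs_of_nonneg ha, abs_of_nonneg hb]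
    exact hx.1.trans (le_abs_self x)
  · rw [abs_of_nonpos ha, abs_of_nonpos hb, min_neg_neg]
    exact (neg_le_neg hx.2).trans (neg_le_abs x)

lemma Function.Even.le_of_abs_le {m : ℝ → ℝ} (he : m.Even) (ha : AntitoneOn m (Ici 0))
    {x y : ℝ} (h : |x| ≤ |y|) : m y ≤ m x := by
  have habs : ∀ z, m |z| = m z := fun z => by
    rcases abs_choice z with hz | hz <;> simp only [hz, he z]
  simpa only [habs] using ha (abs_nonneg x) (abs_nonneg y) h

section Multiplier

variable {m : ℝ → ℝ} {N C₀ : ℝ}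

lemma deriv_sq_eq_zero_of_abs_lt (hone : ∀ ξ, |ξ| ≤ N → m ξ = 1) {x : ℝ} (hx : |x| < N) :
    deriv (fun y => m y ^ 2) x = 0 := by
  have hloc : (fun y => m y ^ 2) =ᶠ[𝓝 x] fun _ => 1 := by
    filter_upwards [(isOpen_lt continuous_abs continuous_const).mem_nhds hx] with y hy
    rw [hone y hy.le, one_pow]
  rw [hloc.deriv_eq, deriv_const]

lemma abs_deriv_sq_mul_abs_le (hC₀ : 0 ≤ C₀) (hone : ∀ ξ, |ξ| ≤ N → m ξ = 1)
    (hder : ∀ ξ, N ≤ |ξ| → |deriv (fun x => m x ^ 2) ξ| ≤ C₀ * m ξ ^ 2 / |ξ|) (x : ℝ) :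
    |deriv (fun y => m y ^ 2) x| * |x| ≤ C₀ * m x ^ 2 := by
  rcases lt_or_ge |x| N with hx | hx
  · rw [deriv_sq_eq_zero_of_abs_lt hone hx, abs_zero, zero_mul]
    positivity
  rcases eq_or_ne x 0 with rfl | h0
  · rw [abs_zero, mul_zero]
    positivity
  calc _ ≤ C₀ * m x ^ 2 / |x| * |x| := by gcongr; exact hder x hx
    _ = C₀ * m x ^ 2 := div_mul_cancel₀ _ (abs_ne_zero.2 h0)

lemma abs_deriv_sq_mul_self_le (hd : Differentiable ℝ m) (hC₀ : 0 ≤ C₀)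
    (hone : ∀ ξ, |ξ| ≤ N → m ξ = 1)
    (hder : ∀ ξ, N ≤ |ξ| → |deriv (fun x => m x ^ 2) ξ| ≤ C₀ * m ξ ^ 2 / |ξ|) (x : ℝ) :
    |deriv (fun y => m y ^ 2 * y) x| ≤ (C₀ + 1) * m x ^ 2 := by
  have hg : deriv (fun y => m y ^ 2 * y) x = deriv (fun y => m y ^ 2) x * x + m x ^ 2 := by
    have hsq : DifferentiableAt ℝ (fun y => m y ^ 2) x := (hd x).pow 2
    have h : HasDerivAt (fun y => m y ^ 2 * y) (deriv (fun y => m y ^ 2) x * x + m x ^ 2 * 1) x :=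
      hsq.hasDerivAt.mul (hasDerivAt_id' x)
    rw [h.deriv, mul_one]
  calc _ ≤ |deriv (fun y => m y ^ 2) x| * |x| + m x ^ 2 := by
        rw [hg]
        exact (abs_add_le _ _).trans_eq (by rw [abs_mul, abs_of_nonneg (sq_nonneg (m x))])
    _ ≤ (C₀ + 1) * m x ^ 2 := by linarith [abs_deriv_sq_mul_abs_le hC₀ hone hder x]

lemma abs_sq_mul_sub_sq_mul_le (hd : Differentiable ℝ m) (he : m.Even)
    (hanti : AntitoneOn m (Ici 0)) (hpos : ∀ ξ, 0 ≤ m ξ) (hC₀ : 0 ≤ C₀)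
    (hone : ∀ ξ, |ξ| ≤ N → m ξ = 1)
    (hder : ∀ ξ, N ≤ |ξ| → |deriv (fun x => m x ^ 2) ξ| ≤ C₀ * m ξ ^ 2 / |ξ|)
    {ξ a b : ℝ} (hab : 0 ≤ a * b) (hξa : |ξ| ≤ |a|) (hξb : |ξ| ≤ |b|) :
    |m b ^ 2 * b - m a ^ 2 * a| ≤ (C₀ + 1) * m ξ ^ 2 * |b - a| := by
  have hbound : ∀ x ∈ uIcc a b, ‖deriv (fun y => m y ^ 2 * y) x‖ ≤ (C₀ + 1) * m ξ ^ 2 := by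
    intro x hx
    have hξx : |ξ| ≤ |x| := (le_min hξa hξb).trans (min_abs_le_abs_of_mem_uIcc hab hx)
    calc ‖deriv (fun y => m y ^ 2 * y) x‖ ≤ (C₀ + 1) * m x ^ 2 :=
          abs_deriv_sq_mul_self_le hd hC₀ hone hder x
      _ ≤ (C₀ + 1) * m ξ ^ 2 := by
          have := hpos x
          gcongr
          exact he.le_of_abs_le hanti hξx
  exact Convex.norm_image_sub_le_of_norm_deriv_le
    (fun x _ => ((hd x).pow 2).mul differentiableAt_id) hbound (convex_uIcc a b) left_mem_uIcc right_mem_uIcc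

lemma abs_sq_mul_add_sq_mul_add_sq_mul_le (hd : Differentiable ℝ m) (he : m.Even)
    (hanti : AntitoneOn m (Ici 0)) (hpos : ∀ ξ, 0 ≤ m ξ) (hC₀ : 0 ≤ C₀)
    (hone : ∀ ξ, |ξ| ≤ N → m ξ = 1)
    (hder : ∀ ξ, N ≤ |ξ| → |deriv (fun x => m x ^ 2) ξ| ≤ C₀ * m ξ ^ 2 / |ξ|)
    {ξ₁ ξ₂ ξ₃ : ℝ} (hsum : ξ₁ + ξ₂ + ξ₃ = 0) (h12 : |ξ₁| ≤ |ξ₂|) (h23 : |ξ₂| ≤ |ξ₃|) :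
    |m ξ₁ ^ 2 * ξ₁ + m ξ₂ ^ 2 * ξ₂ + m ξ₃ ^ 2 * ξ₃| ≤ (C₀ + 2) * m ξ₁ ^ 2 * |ξ₁| := by
  have hodd : m ξ₃ ^ 2 * ξ₃ = -(m (-ξ₃) ^ 2 * -ξ₃) := by rw [he]; ring
  have hsign : 0 ≤ -ξ₃ * ξ₂ := by
    have h12sq := sq_le_sq.2 h12
    rw [show ξ₁ = -(ξ₂ + ξ₃) by linarith] at h12sq
    nlinarith [sq_nonneg ξ₃]
  have hdiff : |ξ₂ - -ξ₃| = |ξ₁| := by rw [show ξ₂ - -ξ₃ = -ξ₁ by linarith, abs_neg]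
  calc _ = |m ξ₁ ^ 2 * ξ₁ + (m ξ₂ ^ 2 * ξ₂ - m (-ξ₃) ^ 2 * -ξ₃)| := by rw [hodd]; ring_nf
    _ ≤ |m ξ₁ ^ 2 * ξ₁| + |m ξ₂ ^ 2 * ξ₂ - m (-ξ₃) ^ 2 * -ξ₃| := abs_add_le _ _
    _ ≤ m ξ₁ ^ 2 * |ξ₁| + (C₀ + 1) * m ξ₁ ^ 2 * |ξ₂ - -ξ₃| := by
        gcongr
        · rw [abs_mul, abs_of_nonneg (sq_nonneg (m ξ₁))]
        · exact abs_sq_mul_sub_sq_mul_le hd he hanti hpos hC₀ hone hder hsign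
            ((h12.trans h23).trans_eq (abs_neg ξ₃).symm) h12
    _ = (C₀ + 2) * m ξ₁ ^ 2 * |ξ₁| := by rw [hdiff]; ring

end Multiplier

lemma norm_neg_I_mul_div_three_I_mul_sub_le (M P r : ℝ) (hP : P ≠ 0) :
    ‖-I * (M : ℂ) / (3 * I * (P : ℂ) - (r : ℂ))‖ ≤ |M| / (3 * |P|) := by
  have hden : 3 * |P| ≤ ‖3 * I * (P : ℂ) - (r : ℂ)‖ := by
    simpa [abs_mul] using abs_im_le_norm (3 * I * (P : ℂ) - (r : ℂ))
  rw [norm_div, norm_mul, norm_neg, norm_I, one_mul, norm_real, Real.norm_eq_abs]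
  gcongr

lemma abs_mul_sq_le_two_mul_abs_mul_mul {ξ₁ ξ₂ ξ₃ : ℝ} (hsum : ξ₁ + ξ₂ + ξ₃ = 0)
    (h12 : |ξ₁| ≤ |ξ₂|) : |ξ₁| * ξ₃ ^ 2 ≤ 2 * |ξ₁ * ξ₂ * ξ₃| := by
  have h3 : |ξ₃| ≤ 2 * |ξ₂| := by
    have := abs_add_le ξ₁ ξ₂
    rw [show ξ₁ + ξ₂ = -ξ₃ by linarith, abs_neg] at this
    linarith
  calc |ξ₁| * ξ₃ ^ 2 = |ξ₁| * |ξ₃| * |ξ₃| := by rw [← sq_abs ξ₃]; ring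
    _ ≤ |ξ₁| * |ξ₃| * (2 * |ξ₂|) := by gcongr
    _ = 2 * |ξ₁ * ξ₂ * ξ₃| := by rw [abs_mul, abs_mul]; ring

/-- Pointwise bounds for the cubic I-method multiplier of the KdV–Burgers modified energy:
(i) `|m²(ξ₁)ξ₁ + m²(ξ₂)ξ₂ + m²(ξ₃)ξ₃| ≤ C m²(ξ₁)|ξ₁|` on `ξ₁+ξ₂+ξ₃=0`, `|ξ₁|≤|ξ₂|≤|ξ₃|`;
(ii) `|σ₃(ξ₁,ξ₂,ξ₃)| ≤ C m²(ξ₁)/ξ₃²`, uniformly in `ε > 0` and `0 < α ≤ 1`. -/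
theorem sigma3_pointwise_bound (C₀ : ℝ) (hC₀ : 0 < C₀) :
    ∃ C > (0 : ℝ), ∀ N : ℝ, 1 ≤ N → ∀ m : ℝ → ℝ,
      ContDiff ℝ 1 m → (∀ ξ, m (-ξ) = m ξ) → (∀ ξ, 0 < m ξ ∧ m ξ ≤ 1) →
      (∀ ξ, |ξ| ≤ N → m ξ = 1) → AntitoneOn m (Set.Ici 0) →
      (∀ ξ : ℝ, N ≤ |ξ| → |deriv (fun x => m x ^ 2) ξ| ≤ C₀ * m ξ ^ 2 / |ξ|) →
      ∀ ξ₁ ξ₂ ξ₃ : ℝ, ξ₁ + ξ₂ + ξ₃ = 0 → |ξ₁| ≤ |ξ₂| → |ξ₂| ≤ |ξ₃| →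
        |m ξ₁ ^ 2 * ξ₁ + m ξ₂ ^ 2 * ξ₂ + m ξ₃ ^ 2 * ξ₃| ≤ C * m ξ₁ ^ 2 * |ξ₁| ∧
        (ξ₁ ≠ 0 → ∀ ε α : ℝ, 0 < ε → 0 < α → α ≤ 1 →
          ‖(-Complex.I * ((m ξ₁ ^ 2 * ξ₁ + m ξ₂ ^ 2 * ξ₂ + m ξ₃ ^ 2 * ξ₃ : ℝ) : ℂ)) /
              (3 * Complex.I * ((ξ₁ * ξ₂ * ξ₃ : ℝ) : ℂ) -
                ((ε * (|ξ₁| ^ (2 * α) + |ξ₂| ^ (2 * α) + |ξ₃| ^ (2 * α)) : ℝ) : ℂ))‖ ≤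
            C * m ξ₁ ^ 2 / ξ₃ ^ 2) := by
  refine ⟨C₀ + 2, by linarith, fun N _ m hm he hm01 hone hanti hder ξ₁ ξ₂ ξ₃ hsum h12 h23 => ?_⟩
  have hM := abs_sq_mul_add_sq_mul_add_sq_mul_le (hm.differentiable one_ne_zero) he hanti
    (fun ξ => (hm01 ξ).1.le) hC₀.le hone hder hsum h12 h23
  refine ⟨hM, fun h1 _ _ _ _ _ => ?_⟩
  have h2 : ξ₂ ≠ 0 := abs_pos.1 ((abs_pos.2 h1).trans_le h12)
  have h3 : ξ₃ ≠ 0 := abs_pos.1 ((abs_pos.2 h2).trans_le h23)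
  have hm1 : 0 < m ξ₁ ^ 2 := pow_pos (hm01 ξ₁).1 2
  calc _ ≤ |m ξ₁ ^ 2 * ξ₁ + m ξ₂ ^ 2 * ξ₂ + m ξ₃ ^ 2 * ξ₃| / (3 * |ξ₁ * ξ₂ * ξ₃|) :=
        norm_neg_I_mul_div_three_I_mul_sub_le _ _ _ (by positivity)
    _ ≤ (C₀ + 2) * m ξ₁ ^ 2 * |ξ₁| / (3 / 2 * (|ξ₁| * ξ₃ ^ 2)) :=
        div_le_div₀ (by positivity) hM (by positivity)
          (by linarith [abs_mul_sq_le_two_mul_abs_mul_mul hsum h12])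
    _ = 2 / 3 * ((C₀ + 2) * m ξ₁ ^ 2 / ξ₃ ^ 2) := by field_simp
    _ ≤ (C₀ + 2) * m ξ₁ ^ 2 / ξ₃ ^ 2 := by
        have : 0 ≤ (C₀ + 2) * m ξ₁ ^ 2 / ξ₃ ^ 2 := by positivity
        linarith
end

section
/- Let N ≥ 1, C₀ > 0, and let m : ℝ → (0,1] be a continuously differentiable even function with m(ξ) = 1 for |ξ| ≤ N, m nonincreasing on [0,∞), and |(m²)'(ξ)| ≤ C₀ m²(ξ)/|ξ| for |ξ| ≥ N. Let ε > 0 and 0 < α ≤ 1. For ξ₁+ξ₂+ξ₃ = 0 (not all zero) define σ₃(ξ₁,ξ₂,ξ₃) = -i M̃ / ( 3iξ₁ξ₂ξ₃ - εβ ) and σ₃⁻(ξ₁,ξ₂,ξ₃) = -i M̃ / ( 3iξ₁ξ₂ξ₃ + εβ ), where M̃ = m²(ξ₁)ξ₁ + m²(ξ₂)ξ₂ + m²(ξ₃)ξ₃ and β = |ξ₁|^{2α}+|ξ₂|^{2α}+|ξ₃|^{2α}. Then there is a constant C depending only on C₀ such that |σ₃(ξ₁,ξ₂,ξ₃) - σ₃⁻(ξ₁,ξ₂,ξ₃)|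 ≤ C ε M^{2α} m²(μ) μ / ( (ξ₁ξ₂ξ₃)² + ε² M^{4α} ), where M = max(|ξ₁|,|ξ₂|,|ξ₃|) and μ = min(|ξ₁|,|ξ₂|,|ξ₃|). -/
/-!
The two multipliers differ only in the sign of the real part `εβ` of their denominators, so
`|σ₃ - σ₃⁻| = 2εβ|M̃| / (9(ξ₁ξ₂ξ₃)² + ε²β²)`, and `M^{2α} ≤ β ≤ 3M^{2α}`. It remains to show
`|M̃| ≲ m²(μ) μ`. Subtracting `m²(ξ₂)(ξ₁ + ξ₂ + ξ₃) = 0` gives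
`M̃ = (m²(ξ₁) - m²(ξ₂)) ξ₁ + (m²(ξ₃) - m²(ξ₂)) ξ₃`. For `|ξ₁| ≥ |ξ₂| ≥ |ξ₃|` the second term is
at most `m²(ξ₃)|ξ₃|` by monotonicity, and the mean value theorem bounds the first one, because
`|ξ₁| - |ξ₂| ≤ |ξ₃|` and `|ξ₁| ≤ 2|ξ₂|` keep the derivative bound `C₀ m²/|ξ|` under control.
-/

open Complex

lemma Function.Even.apply_abs {β : Type*} {f : ℝ → β} (hf : f.Even) (x : ℝ) : f |x| = f x := by
  rcases abs_choice x with h | h <;> simp only [h, hf x]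

section Multiplier

variable {m : ℝ → ℝ} {N C₀ : ℝ}

lemma apply_max_eq_of_eq_one (hm_one : ∀ ξ, |ξ| ≤ N → m ξ = 1) {p : ℝ} (hp : 0 ≤ p) :
    m (max N p) = m p := by
  rcases le_total N p with h | h
  · rw [max_eq_right h]
  · rw [max_eq_left h, hm_one N (by rw [abs_of_nonneg (hp.trans h)]),
      hm_one p (by rwa [abs_of_nonneg hp])]

lemma abs_deriv_sq_le (hC₀ : 0 ≤ C₀) (hm_nonneg : ∀ ξ, 0 ≤ m ξ)
    (hm_anti : AntitoneOn m (Set.Ici 0))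
    (hm_deriv : ∀ ξ : ℝ, N ≤ |ξ| → |deriv (fun x => m x ^ 2) ξ| ≤ C₀ * m ξ ^ 2 / |ξ|)
    {p x : ℝ} (hp : 0 < p) (hNp : N ≤ p) (hpx : p ≤ x) :
    |deriv (fun x => m x ^ 2) x| ≤ C₀ * m p ^ 2 / p := by
  have hx : 0 < x := hp.trans_le hpx
  have hmx : m x ≤ m p := hm_anti (Set.mem_Ici.2 hp.le) (Set.mem_Ici.2 hx.le) hpx
  calc |deriv (fun x => m x ^ 2) x| ≤ C₀ * m x ^ 2 / x := by
        simpa only [abs_of_pos hx] using hm_deriv x (by rw [abs_of_pos hx]; linarith)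
    _ ≤ C₀ * m p ^ 2 / p := by
        have := hm_nonneg x
        gcongr

lemma abs_sq_sub_sq_mul_max_le (hm : Differentiable ℝ m) (hN : 0 < N) (hC₀ : 0 ≤ C₀)
    (hm_nonneg : ∀ ξ, 0 ≤ m ξ) (hm_one : ∀ ξ, |ξ| ≤ N → m ξ = 1)
    (hm_anti : AntitoneOn m (Set.Ici 0))
    (hm_deriv : ∀ ξ : ℝ, N ≤ |ξ| → |deriv (fun x => m x ^ 2) ξ| ≤ C₀ * m ξ ^ 2 / |ξ|)
    {p q : ℝ} (hp : 0 ≤ p) (hpq : p ≤ q) :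
    |m q ^ 2 - m p ^ 2| * max N p ≤ C₀ * m p ^ 2 * (q - p) := by
  have hmp : m (max N p) = m p := apply_max_eq_of_eq_one hm_one hp
  have hmax : 0 < max N p := lt_max_of_lt_left hN
  rcases le_or_gt q N with hqN | hNq
  · rw [hm_one q (by rwa [abs_of_nonneg (hp.trans hpq)]),
      hm_one p (by rw [abs_of_nonneg hp]; linarith)]
    have := hm_nonneg p
    simp only [one_pow, sub_self, abs_zero, zero_mul]
    nlinarith
  -- Moving the left endpoint to `max N p` keeps `m²` and brings the derivative bound into play.
  have hmaxq : max N p ≤ q := max_le hNq.le hpq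
  have hsq : Differentiable ℝ (fun x => m x ^ 2) := hm.pow 2
  have hmvt := norm_image_sub_le_of_norm_deriv_le_segment'
    (fun x _ => (hsq x).hasDerivAt.hasDerivWithinAt)
    (fun x hx => abs_deriv_sq_le hC₀ hm_nonneg hm_anti hm_deriv hmax (le_max_left N p) hx.1)
    q (Set.right_mem_Icc.2 hmaxq)
  rw [Real.norm_eq_abs, hmp] at hmvt
  calc |m q ^ 2 - m p ^ 2| * max N p ≤ C₀ * m p ^ 2 / max N p * (q - max N p) * max N p := by
        gcongr
    _ ≤ C₀ * m p ^ 2 * (q - p) := by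
        rw [div_mul_eq_mul_div, div_mul_cancel₀ _ hmax.ne']
        have := hm_nonneg p
        gcongr
        exact le_max_right N p

lemma abs_weighted_sum_le_of_min (hm : Differentiable ℝ m) (hm_even : m.Even) (hN : 0 < N)
    (hC₀ : 0 ≤ C₀) (hm_nonneg : ∀ ξ, 0 ≤ m ξ) (hm_one : ∀ ξ, |ξ| ≤ N → m ξ = 1)
    (hm_anti : AntitoneOn m (Set.Ici 0))
    (hm_deriv : ∀ ξ : ℝ, N ≤ |ξ| → |deriv (fun x => m x ^ 2) ξ| ≤ C₀ * m ξ ^ 2 / |ξ|)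
    {ξ₁ ξ₂ ξ₃ : ℝ} (hsum : ξ₁ + ξ₂ + ξ₃ = 0) (h31 : |ξ₃| ≤ |ξ₁|) (h32 : |ξ₃| ≤ |ξ₂|) :
    |m ξ₁ ^ 2 * ξ₁ + m ξ₂ ^ 2 * ξ₂ + m ξ₃ ^ 2 * ξ₃| ≤ (2 * C₀ + 1) * (m ξ₃ ^ 2 * |ξ₃|) := by
  wlog h21 : |ξ₂| ≤ |ξ₁| generalizing ξ₁ ξ₂
  · have := this (ξ₁ := ξ₂) (ξ₂ := ξ₁) (by linarith) h32 h31 (le_of_not_ge h21)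
    rwa [add_comm (m ξ₂ ^ 2 * ξ₂)] at this
  have hgap : |ξ₁| - |ξ₂| ≤ |ξ₃| := by
    simpa only [show ξ₁ + ξ₂ = -ξ₃ by linarith, abs_neg] using abs_sub_abs_le_abs_add ξ₁ ξ₂
  have hm23 : m |ξ₂| ≤ m |ξ₃| :=
    hm_anti (Set.mem_Ici.2 (abs_nonneg _)) (Set.mem_Ici.2 (abs_nonneg _)) h32
  have hm2 := hm_nonneg |ξ₂|
  have hfirst : |(m ξ₁ ^ 2 - m ξ₂ ^ 2) * ξ₁| ≤ 2 * C₀ * (m ξ₃ ^ 2 * |ξ₃|) := by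
    rw [abs_mul, ← hm_even.apply_abs ξ₁, ← hm_even.apply_abs ξ₂, ← hm_even.apply_abs ξ₃]
    have hmvt := abs_sq_sub_sq_mul_max_le hm hN hC₀ hm_nonneg hm_one hm_anti hm_deriv
      (abs_nonneg ξ₂) h21
    calc |m |ξ₁| ^ 2 - m |ξ₂| ^ 2| * |ξ₁| ≤ |m |ξ₁| ^ 2 - m |ξ₂| ^ 2| * (2 * max N |ξ₂|) := by
          gcongr
          linarith [le_max_right N |ξ₂|]
      _ ≤ 2 * C₀ * (m |ξ₂| ^ 2 * (|ξ₁| - |ξ₂|)) := by linarith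
      _ ≤ 2 * C₀ * (m |ξ₃| ^ 2 * |ξ₃|) := by gcongr
  have hsecond : |(m ξ₃ ^ 2 - m ξ₂ ^ 2) * ξ₃| ≤ m ξ₃ ^ 2 * |ξ₃| := by
    rw [abs_mul, ← hm_even.apply_abs ξ₂, ← hm_even.apply_abs ξ₃]
    have : m |ξ₂| ^ 2 ≤ m |ξ₃| ^ 2 := by gcongr
    gcongr
    rw [abs_of_nonneg (sub_nonneg.2 this)]
    linarith [sq_nonneg (m |ξ₂|)]
  calc |m ξ₁ ^ 2 * ξ₁ + m ξ₂ ^ 2 * ξ₂ + m ξ₃ ^ 2 * ξ₃|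
      = |(m ξ₁ ^ 2 - m ξ₂ ^ 2) * ξ₁ + (m ξ₃ ^ 2 - m ξ₂ ^ 2) * ξ₃| := by
        congr 1
        linear_combination m ξ₂ ^ 2 * hsum
    _ ≤ |(m ξ₁ ^ 2 - m ξ₂ ^ 2) * ξ₁| + |(m ξ₃ ^ 2 - m ξ₂ ^ 2) * ξ₃| := abs_add_le _ _
    _ ≤ (2 * C₀ + 1) * (m ξ₃ ^ 2 * |ξ₃|) := by linarith

lemma abs_weighted_sum_le_min (hm : Differentiable ℝ m) (hm_even : m.Even) (hN : 0 < N)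
    (hC₀ : 0 ≤ C₀) (hm_nonneg : ∀ ξ, 0 ≤ m ξ) (hm_one : ∀ ξ, |ξ| ≤ N → m ξ = 1)
    (hm_anti : AntitoneOn m (Set.Ici 0))
    (hm_deriv : ∀ ξ : ℝ, N ≤ |ξ| → |deriv (fun x => m x ^ 2) ξ| ≤ C₀ * m ξ ^ 2 / |ξ|)
    {ξ₁ ξ₂ ξ₃ : ℝ} (hsum : ξ₁ + ξ₂ + ξ₃ = 0) :
    |m ξ₁ ^ 2 * ξ₁ + m ξ₂ ^ 2 * ξ₂ + m ξ₃ ^ 2 * ξ₃| ≤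
      (2 * C₀ + 1) * (m (min |ξ₁| (min |ξ₂| |ξ₃|)) ^ 2 * min |ξ₁| (min |ξ₂| |ξ₃|)) := by
  have key := @abs_weighted_sum_le_of_min m N C₀ hm hm_even hN hC₀ hm_nonneg hm_one hm_anti hm_deriv
  have h1 : min |ξ₁| (min |ξ₂| |ξ₃|) ≤ |ξ₁| := min_le_left _ _
  have h2 : min |ξ₁| (min |ξ₂| |ξ₃|) ≤ |ξ₂| := (min_le_right _ _).trans (min_le_left _ _)
  have h3 : min |ξ₁| (min |ξ₂| |ξ₃|) ≤ |ξ₃| := (min_le_right _ _).trans (min_le_right _ _)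
  obtain h | h | h : min |ξ₁| (min |ξ₂| |ξ₃|) = |ξ₁| ∨ min |ξ₁| (min |ξ₂| |ξ₃|) = |ξ₂| ∨
      min |ξ₁| (min |ξ₂| |ξ₃|) = |ξ₃| := by
    rcases min_choice |ξ₁| (min |ξ₂| |ξ₃|) with h | h
    · exact .inl h
    · rw [h]; exact .inr (min_choice _ _)
  all_goals rw [h] at h1 h2 h3 ⊢; rw [hm_even.apply_abs]
  · convert key (ξ₁ := ξ₂) (ξ₂ := ξ₃) (ξ₃ := ξ₁) (by linarith) h2 h3 using 2
    ring
  · convert key (ξ₁ := ξ₁) (ξ₂ := ξ₃) (ξ₃ := ξ₂) (by linarith) h1 h3 using 2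
    ring
  · exact key hsum h1 h2

end Multiplier

lemma norm_div_sub_div_eq (A P b : ℝ) (hb : b ≠ 0) :
    ‖(-I * (A : ℂ)) / (3 * I * (P : ℂ) - (b : ℂ)) - (-I * (A : ℂ)) / (3 * I * (P : ℂ) + (b : ℂ))‖ =
      2 * |b| * |A| / (9 * P ^ 2 + b ^ 2) := by
  have hne : ∀ s : ℝ, s ≠ 0 → 3 * I * (P : ℂ) + (s : ℂ) ≠ 0 := fun s hs h => by
    simpa [hs] using congrArg re h
  have h₁ : 3 * I * (P : ℂ) - (b : ℂ) ≠ 0 := by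
    simpa only [ofReal_neg, ← sub_eq_add_neg] using hne (-b) (neg_ne_zero.2 hb)
  have hd : (9 * P ^ 2 + b ^ 2 : ℝ) ≠ 0 := by positivity
  have : (-I * (A : ℂ)) / (3 * I * (P : ℂ) - (b : ℂ)) - (-I * (A : ℂ)) / (3 * I * (P : ℂ) + (b : ℂ))
      = ((2 * b * A / (9 * P ^ 2 + b ^ 2) : ℝ) : ℂ) * I := by
    rw [div_sub_div _ _ h₁ (hne b hb), ofReal_div, div_mul_eq_mul_div,
      div_eq_div_iff (mul_ne_zero h₁ (hne b hb)) (ofReal_ne_zero.2 hd)]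
    push_cast
    linear_combination (-18 * A * b * P ^ 2) * I * I_sq
  rw [this, norm_mul, norm_I, mul_one, norm_real, Real.norm_eq_abs, abs_div, abs_mul, abs_mul,
    abs_two, abs_of_nonneg (by positivity : (0 : ℝ) ≤ 9 * P ^ 2 + b ^ 2)]

lemma norm_div_sub_div_le {A P b w K : ℝ} (hw : 0 < w) (hwb : w ≤ b) (hbw : b ≤ 3 * w)
    (hA : |A| ≤ K) :
    ‖(-I * (A : ℂ)) / (3 * I * (P : ℂ) - (b : ℂ)) - (-I * (A : ℂ)) / (3 * I * (P : ℂ) + (b : ℂ))‖ ≤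
      6 * w * K / (P ^ 2 + w ^ 2) := by
  have hb : 0 < b := hw.trans_le hwb
  rw [norm_div_sub_div_eq A P b hb.ne', abs_of_pos hb]
  have hK : 0 ≤ K := (abs_nonneg A).trans hA
  have hnum : 2 * b * |A| ≤ 6 * w * K := by nlinarith [abs_nonneg A]
  have hden : P ^ 2 + w ^ 2 ≤ 9 * P ^ 2 + b ^ 2 := by nlinarith [sq_nonneg P]
  exact div_le_div₀ (by positivity) hnum (by positivity) hden

lemma rpow_max_le_add {a b c : ℝ} (ha : 0 ≤ a) (hb : 0 ≤ b) (hc : 0 ≤ c) (r : ℝ) :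
    max a (max b c) ^ r ≤ a ^ r + b ^ r + c ^ r := by
  have := Real.rpow_nonneg ha r
  have := Real.rpow_nonneg hb r
  have := Real.rpow_nonneg hc r
  rcases max_choice a (max b c) with h | h <;> rw [h]
  · linarith
  · rcases max_choice b c with h | h <;> rw [h] <;> linarith

lemma add_rpow_le_three_mul_rpow_max {a b c r : ℝ} (ha : 0 ≤ a) (hb : 0 ≤ b) (hc : 0 ≤ c)
    (hr : 0 ≤ r) : a ^ r + b ^ r + c ^ r ≤ 3 * max a (max b c) ^ r := by
  have h₁ : a ^ r ≤ max a (max b c) ^ r := by gcongr; exact le_max_left _ _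
  have h₂ : b ^ r ≤ max a (max b c) ^ r := by gcongr; exact le_max_of_le_right (le_max_left _ _)
  have h₃ : c ^ r ≤ max a (max b c) ^ r := by gcongr; exact le_max_of_le_right (le_max_right _ _)
  linarith


/-- The difference of the two cubic I-method multipliers `σ₃` and `σ₃⁻` (with the two signs
of the dissipative term in the denominator) is small, proportional to `ε`:
`|σ₃ - σ₃⁻| ≤ C ε M^{2α} m²(μ) μ / ((ξ₁ξ₂ξ₃)² + ε² M^{4α})` where `M` is the largest and
`μ` the smallest of `|ξ₁|, |ξ₂|, |ξ₃|`. -/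
theorem sigma3_difference_bound (C₀ : ℝ) (hC₀ : 0 < C₀) :
    ∃ C > (0 : ℝ), ∀ N : ℝ, 1 ≤ N → ∀ m : ℝ → ℝ,
      ContDiff ℝ 1 m → (∀ ξ, m (-ξ) = m ξ) → (∀ ξ, 0 < m ξ ∧ m ξ ≤ 1) →
      (∀ ξ, |ξ| ≤ N → m ξ = 1) → AntitoneOn m (Set.Ici 0) →
      (∀ ξ : ℝ, N ≤ |ξ| → |deriv (fun x => m x ^ 2) ξ| ≤ C₀ * m ξ ^ 2 / |ξ|) →
      ∀ ε α : ℝ, 0 < ε → 0 < α → α ≤ 1 →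
      ∀ ξ₁ ξ₂ ξ₃ : ℝ, ξ₁ + ξ₂ + ξ₃ = 0 → ¬(ξ₁ = 0 ∧ ξ₂ = 0 ∧ ξ₃ = 0) →
        ‖(-Complex.I * ((m ξ₁ ^ 2 * ξ₁ + m ξ₂ ^ 2 * ξ₂ + m ξ₃ ^ 2 * ξ₃ : ℝ) : ℂ)) /
            (3 * Complex.I * ((ξ₁ * ξ₂ * ξ₃ : ℝ) : ℂ) -
              ((ε * (|ξ₁| ^ (2 * α) + |ξ₂| ^ (2 * α) + |ξ₃| ^ (2 * α)) : ℝ) : ℂ)) -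
          (-Complex.I * ((m ξ₁ ^ 2 * ξ₁ + m ξ₂ ^ 2 * ξ₂ + m ξ₃ ^ 2 * ξ₃ : ℝ) : ℂ)) /
            (3 * Complex.I * ((ξ₁ * ξ₂ * ξ₃ : ℝ) : ℂ) +
              ((ε * (|ξ₁| ^ (2 * α) + |ξ₂| ^ (2 * α) + |ξ₃| ^ (2 * α)) : ℝ) : ℂ))‖ ≤
          C * ε * (max |ξ₁| (max |ξ₂| |ξ₃|)) ^ (2 * α) *
              m (min |ξ₁| (min |ξ₂| |ξ₃|)) ^ 2 * (min |ξ₁| (min |ξ₂| |ξ₃|)) /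
            ((ξ₁ * ξ₂ * ξ₃) ^ 2 + ε ^ 2 * (max |ξ₁| (max |ξ₂| |ξ₃|)) ^ (4 * α)) := by
  refine ⟨6 * (2 * C₀ + 1), by positivity, ?_⟩
  intro N hN m hm hm_even hm_bound hm_one hm_anti hm_deriv ε α hε hα _ ξ₁ ξ₂ ξ₃ hsum hne
  set M := max |ξ₁| (max |ξ₂| |ξ₃|)
  have hM : 0 < M := by
    contrapose! hne
    simpa only [M, max_le_iff, abs_nonpos_iff] using hne
  have hA := abs_weighted_sum_le_min (hm.differentiable one_ne_zero) hm_even (by linarith)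
    hC₀.le (fun ξ => (hm_bound ξ).1.le) hm_one hm_anti hm_deriv hsum
  refine (norm_div_sub_div_le (w := ε * M ^ (2 * α)) (by positivity) ?_ ?_ hA).trans_eq ?_
  · gcongr
    exact rpow_max_le_add (abs_nonneg _) (abs_nonneg _) (abs_nonneg _) _
  · rw [mul_left_comm]
    gcongr
    exact add_rpow_le_three_mul_rpow_max (abs_nonneg _) (abs_nonneg _) (abs_nonneg _) (by positivity)
  · have hM4 : (M ^ (2 * α)) ^ 2 = M ^ (4 * α) := by
      rw [← Real.rpow_natCast, ← Real.rpow_mul hM.le]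
      ring_nf
    rw [← hM4]
    ring
end
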